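/- arXiv:2401.12707 — 8 statements merged into one kernel-verified Lean document; each statement's English description precedes it below -/
import Mathlib

section
/- Let A be a real n×n matrix and B a real n×p matrix, and let X₋ ∈ ℝ^{n×T}, U₋ ∈ ℝ^{p×T} be data matrices with X₊ := A·X₋ + B·U₋. Suppose Γ ∈ ℝ^{T×n} is such that S := X₋Γ is symmetric, S - Iₙ is positive semidefinite, and the 2n×2n block matrix [[S - Iₙ, X₊Γ], [ΓᵀX₊ᵀ, S]] is positive semidefinite. Then S is invertible, A + B·(U₋Γ S⁻¹) = X₊Γ S⁻¹, and the matrix A + B·(U₋Γ S⁻¹) is Schur stable. -/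
/-!
Since `S ⪰ I`, `S` is positive definite. For the closed-loop matrix `M = A + B K = X₊ Γ S⁻¹`
we have `M S Mᵀ = (X₊Γ) S⁻¹ (X₊Γ)ᵀ`, so the Schur complement of the block LMI says
`S - M S Mᵀ ⪰ I`: `S` is a Lyapunov certificate for `M`. If `v` is a left eigenvector of `M`
with eigenvalue `μ`, this gives `(1 - |μ|²) v* S v > 0` with `v* S v ≥ 0`, hence `|μ| < 1`.
-/

open Matrix

noncomputable section

/-- A complex square matrix is Schur stable if every eigenvalue has modulus `< 1`. -/
def SchurStable {m : Type*} [Fintype m] [DecidableEq m] (M : Matrix m m ℂ) : Prop :=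
  ∀ μ ∈ spectrum ℂ M, ‖μ‖ < 1

/-- A real square matrix is Schur stable if every complex eigenvalue has modulus `< 1`. -/
def SchurStableR {m : Type*} [Fintype m] [DecidableEq m] (M : Matrix m m ℝ) : Prop :=
  SchurStable (M.map Complex.ofReal)

open ComplexOrder

namespace Matrix

variable {l m n : Type*}

theorem transpose_map_ofReal (M : Matrix m n ℝ) :
    Mᵀ.map Complex.ofReal = (M.map Complex.ofReal)ᴴ := by
  rw [← conjTranspose_eq_transpose_of_trivial, conjTranspose_map]
  exact fun x => (Complex.conj_ofReal x).symm

theorem map_ofReal_mul [Fintype m] (L : Matrix l m ℝ) (N : Matrix m n ℝ) :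
    (L * N).map Complex.ofReal = L.map Complex.ofReal * N.map Complex.ofReal :=
  Matrix.map_mul (f := Complex.ofRealHom)

variable [Fintype m] [DecidableEq m]

theorem PosSemidef.map_ofReal {P : Matrix m m ℝ} (hP : P.PosSemidef) :
    (P.map Complex.ofReal).PosSemidef := by
  obtain ⟨C, rfl⟩ : ∃ C : Matrix m m ℝ, P = Cᴴ * C := by
    open scoped MatrixOrder Matrix.Norms.L2Operator in
    exact CStarAlgebra.nonneg_iff_eq_star_mul_self.mp hP.nonneg
  rw [map_ofReal_mul, conjTranspose_eq_transpose_of_trivial, transpose_map_ofReal]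
  exact posSemidef_conjTranspose_mul_self _

theorem PosDef.map_ofReal {P : Matrix m m ℝ} (hP : P.PosDef) :
    (P.map Complex.ofReal).PosDef := by
  refine hP.posSemidef.map_ofReal.posDef_iff_det_ne_zero.mpr ?_
  change (Complex.ofRealHom.mapMatrix P).det ≠ 0
  rw [← Complex.ofRealHom.map_det P]
  exact Complex.ofReal_ne_zero.mpr hP.det_pos.ne'

theorem add_mul_mul_inv_eq [Fintype n] {R : Type*} [CommRing R] {A S : Matrix m m R} (B : Matrix m n R)
    (C : Matrix n m R) (hS : IsUnit S.det) : A + B * (C * S⁻¹) = (A * S + B * C) * S⁻¹ := by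
  rw [Matrix.add_mul, Matrix.mul_assoc A, mul_nonsing_inv _ hS, Matrix.mul_one, Matrix.mul_assoc]

/-- With `M = C S⁻¹`, the Schur complement of the block matrix is `S - M S Mᴴ - 1`. -/
theorem PosDef.sub_mul_mul_conjTranspose_of_fromBlocks {𝕜 : Type*} [Field 𝕜] [PartialOrder 𝕜]
    [StarRing 𝕜] [StarOrderedRing 𝕜] {S C : Matrix m m 𝕜} (hS : S.PosDef)
    (h : (fromBlocks (S - 1) C Cᴴ S).PosSemidef) :
    (S - C * S⁻¹ * S * (C * S⁻¹)ᴴ).PosDef := by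
  have := hS.isUnit.invertible
  have hschur := (PosDef.fromBlocks₂₂ _ _ hS).mp h
  have hquad : C * S⁻¹ * S * (C * S⁻¹)ᴴ = C * S⁻¹ * Cᴴ := by
    rw [conjTranspose_mul, hS.isHermitian.inv.eq, Matrix.mul_assoc C, inv_mul_of_invertible,
      Matrix.mul_one, Matrix.mul_assoc]
  rw [hquad]
  simpa only [sub_right_comm S 1, sub_add_cancel] using PosDef.posSemidef_add hschur PosDef.one

end Matrix

variable {m : Type*} [Fintype m] [DecidableEq m]

theorem SchurStable.of_lyapunov {M P : Matrix m m ℂ} (hP : P.PosSemidef)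
    (hL : (P - M * P * Mᴴ).PosDef) : SchurStable M := by
  intro μ hμ
  have hμ' : star μ ∈ spectrum ℂ (toLin' Mᴴ) := by
    rwa [spectrum_toLin', ← star_eq_conjTranspose, spectrum.map_star, Set.mem_star, star_star]
  obtain ⟨v, hv⟩ := (Module.End.hasEigenvalue_iff_mem_spectrum.mpr hμ').exists_hasEigenvector
  have heig : Mᴴ *ᵥ v = star μ • v := hv.apply_eq_smul
  have hleft : star v ᵥ* M = μ • star v := by
    simpa [heig] using (star_mulVec Mᴴ v).symm
  have hquad : star v ⬝ᵥ (M * P * Mᴴ) *ᵥ v = ((‖μ‖ ^ 2 : ℝ) : ℂ) * (star v ⬝ᵥ P *ᵥ v) := by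
    rw [← mulVec_mulVec, ← mulVec_mulVec, heig, mulVec_smul, dotProduct_mulVec, hleft,
      smul_dotProduct, dotProduct_smul, smul_eq_mul, smul_eq_mul, ← mul_assoc]
    congr 1
    exact_mod_cast Complex.mul_conj' μ
  have hpos := hL.dotProduct_mulVec_pos hv.2
  rw [sub_mulVec, dotProduct_sub, hquad, ← one_sub_mul] at hpos
  by_contra! hμ1
  have hfactor : ((1 - ‖μ‖ ^ 2 : ℝ) : ℂ) ≤ 0 := by
    norm_cast
    nlinarith [norm_nonneg μ]
  exact (mul_nonpos_of_nonpos_of_nonneg (by exact_mod_cast hfactor)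
    (hP.dotProduct_mulVec_nonneg v)).not_gt hpos

theorem SchurStableR.of_lyapunov {M P : Matrix m m ℝ} (hP : P.PosSemidef)
    (hL : (P - M * P * Mᵀ).PosDef) : SchurStableR M := by
  refine SchurStable.of_lyapunov hP.map_ofReal ?_
  rw [← transpose_map_ofReal, ← map_ofReal_mul, ← map_ofReal_mul, ← Matrix.map_sub _ (by simp)]
  exact hL.map_ofReal

theorem noiseless_data_driven_stabilization_general {n p T : ℕ}
    (A : Matrix (Fin n) (Fin n) ℝ) (B : Matrix (Fin n) (Fin p) ℝ)
    (Xminus : Matrix (Fin n) (Fin T) ℝ) (Uminus : Matrix (Fin p) (Fin T) ℝ)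
    (Xplus : Matrix (Fin n) (Fin T) ℝ) (hXplus : Xplus = A * Xminus + B * Uminus)
    (Γ : Matrix (Fin T) (Fin n) ℝ)
    (S : Matrix (Fin n) (Fin n) ℝ) (hS : S = Xminus * Γ)
    (hSgeI : (S - 1).PosSemidef)
    (hblock : (Matrix.fromBlocks (S - 1) (Xplus * Γ) (Γᵀ * Xplusᵀ) S).PosSemidef) :
    IsUnit S ∧
      A + B * (Uminus * Γ * S⁻¹) = Xplus * Γ * S⁻¹ ∧
      SchurStableR (A + B * (Uminus * Γ * S⁻¹)) := by
  have hSpd : S.PosDef := by simpa using PosDef.posSemidef_add hSgeI PosDef.one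
  have hXΓ : Xplus * Γ = A * S + B * (Uminus * Γ) := by
    rw [hXplus, hS, Matrix.add_mul, Matrix.mul_assoc, Matrix.mul_assoc]
  have hloop : A + B * (Uminus * Γ * S⁻¹) = Xplus * Γ * S⁻¹ := by
    rw [hXΓ, add_mul_mul_inv_eq _ _ ((isUnit_iff_isUnit_det S).mp hSpd.isUnit)]
  refine ⟨hSpd.isUnit, hloop, ?_⟩
  rw [← transpose_mul, ← conjTranspose_eq_transpose_of_trivial] at hblock
  have hlyap := hSpd.sub_mul_mul_conjTranspose_of_fromBlocks hblock
  rw [conjTranspose_eq_transpose_of_trivial] at hlyap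
  exact hloop ▸ SchurStableR.of_lyapunov hSpd.posSemidef hlyap

/-- data-driven stabilization from noiseless data.  Any `Γ` feasible for the
LMI constraints of the data-driven LQR program yields a stabilizing feedback gain
`K = U₋ Γ (X₋ Γ)⁻¹` for the unknown system `(A, B)` generating the data. -/
theorem noiseless_data_driven_stabilization {n p T : ℕ}
    (A : Matrix (Fin n) (Fin n) ℝ) (B : Matrix (Fin n) (Fin p) ℝ)
    (Xminus : Matrix (Fin n) (Fin T) ℝ) (Uminus : Matrix (Fin p) (Fin T) ℝ)
    (Xplus : Matrix (Fin n) (Fin T) ℝ) (hXplus : Xplus = A * Xminus + B * Uminus)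
    (Γ : Matrix (Fin T) (Fin n) ℝ)
    (S : Matrix (Fin n) (Fin n) ℝ) (hS : S = Xminus * Γ)
    (hSsymm : S.IsSymm)
    (hSgeI : (S - 1).PosSemidef)
    (hblock : (Matrix.fromBlocks (S - 1) (Xplus * Γ) (Γᵀ * Xplusᵀ) S).PosSemidef) :
    IsUnit S ∧
      A + B * (Uminus * Γ * S⁻¹) = Xplus * Γ * S⁻¹ ∧
      SchurStableR (A + B * (Uminus * Γ * S⁻¹)) :=
  noiseless_data_driven_stabilization_general A B Xminus Uminus Xplus hXplus Γ S hS hSgeI hblock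
end
end

section
/- Let A_c be a Schur stable real n×n matrix and Q a symmetric real n×n matrix. Suppose P* is a symmetric real n×n matrix satisfying the Lyapunov equation A_cᵀ P* A_c - P* + Q = 0, and P is a symmetric positive semidefinite real n×n matrix satisfying the inequality A_cᵀ P A_c - P + Q ⪰ 0. Then P ⪯ P*; in particular, trace(P) ≤ trace(P*), so P* attains the maximum of the trace over all feasible P. -/
/-!
With `D = P* - P` and `R = A_cᵀ P A_c - P + Q ⪰ 0`, subtracting the Lyapunov equation from the
inequality gives `D = A_cᵀ D A_c + R`. Iterating, `D = (A_cᴺ)ᵀ D A_cᴺ + ∑_{k<N} (A_cᵏ)ᵀ R A_cᵏ`,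
so `D - (A_cᴺ)ᵀ D A_cᴺ ⪰ 0` for every `N`. Schur stability forces `A_cᴺ → 0` (Gelfand's formula),
hence `D` is a limit of positive semidefinite matrices and is positive semidefinite because the
positive semidefinite cone is closed. Taking traces gives `trace P ≤ trace P*`.
-/

open Matrix

noncomputable section

open Filter Topology

theorem tendsto_pow_atTop_nhds_zero_of_spectralRadius_lt_one {A : Type*} [NormedRing A]
    [NormedAlgebra ℂ A] [CompleteSpace A] {a : A} (h : spectralRadius ℂ a < 1) :
    Tendsto (a ^ ·) atTop (𝓝 0) := by
  obtain ⟨r, hr0, hρr, hr1⟩ := ENNReal.lt_iff_exists_real_btwn.mp h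
  have hroot : ∀ᶠ N : ℕ in atTop, ‖a ^ N‖ ^ (1 / N : ℝ) < r := by
    filter_upwards [(spectrum.pow_norm_pow_one_div_tendsto_nhds_spectralRadius a).eventually_lt_const
      hρr] with N hN
    exact (ENNReal.ofReal_lt_ofReal_iff'.mp hN).1
  refine squeeze_zero_norm' ?_
    (tendsto_pow_atTop_nhds_zero_of_lt_one hr0 (ENNReal.ofReal_lt_one.mp hr1))
  filter_upwards [hroot, eventually_ne_atTop 0] with N hN hN0
  calc ‖a ^ N‖ = (‖a ^ N‖ ^ (1 / N : ℝ)) ^ N := by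
        rw [one_div, Real.rpow_inv_natCast_pow (norm_nonneg _) hN0]
    _ ≤ r ^ N := by gcongr

section

attribute [local instance] Matrix.linftyOpNormedRing Matrix.linftyOpNormedAlgebra

theorem SchurStable.tendsto_pow_atTop_nhds_zero {m : Type*} [Fintype m] [DecidableEq m]
    {M : Matrix m m ℂ} (h : SchurStable M) : Tendsto (M ^ ·) atTop (𝓝 0) := by
  cases isEmpty_or_nonempty m
  · exact tendsto_const_nhds.congr fun _ => Subsingleton.elim _ _
  · refine tendsto_pow_atTop_nhds_zero_of_spectralRadius_lt_one ?_
    simpa using spectrum.spectralRadius_lt_of_forall_lt M (r := 1)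
      fun z hz => by simpa [← NNReal.coe_lt_coe] using h z hz

end

theorem SchurStableR.tendsto_pow_atTop_nhds_zero {m : Type*} [Fintype m] [DecidableEq m]
    {M : Matrix m m ℝ} (h : SchurStableR M) : Tendsto (M ^ ·) atTop (𝓝 0) := by
  have hre (N : ℕ) : M ^ N = ((M.map Complex.ofReal) ^ N).map Complex.re := by
    have hpow : (M.map Complex.ofReal) ^ N = (M ^ N).map Complex.ofReal :=
      (Matrix.map_pow M Complex.ofRealHom N).symm
    ext i j
    simp [hpow]
  simpa [hre, Function.comp_def] using
    ((continuous_id.matrix_map Complex.continuous_re).tendsto 0).comp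
      (SchurStable.tendsto_pow_atTop_nhds_zero h)

theorem eq_star_pow_mul_mul_pow_add_sum {α : Type*} [Semiring α] [StarRing α] {a d r : α}
    (h : d = star a * d * a + r) (N : ℕ) :
    d = star (a ^ N) * d * a ^ N + ∑ k ∈ Finset.range N, star (a ^ k) * r * a ^ k := by
  induction N with
  | zero => simp
  | succ N ih =>
    calc d = star a * d * a + r := h
      _ = star a * (star (a ^ N) * d * a ^ N
            + ∑ k ∈ Finset.range N, star (a ^ k) * r * a ^ k) * a + r := by rw [← ih]
      _ = star (a ^ (N + 1)) * d * a ^ (N + 1)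
            + ∑ k ∈ Finset.range (N + 1), star (a ^ k) * r * a ^ k := by
        simp only [Finset.sum_range_succ', pow_succ, pow_zero, star_mul, star_one, one_mul,
          mul_one, mul_add, add_mul, Finset.mul_sum, Finset.sum_mul, mul_assoc, add_assoc]

section

variable {n R : Type*} [Fintype n] [Ring R] [PartialOrder R] [StarRing R] [TopologicalSpace R]
  [IsTopologicalRing R] [ContinuousStar R] [OrderClosedTopology R]

theorem Matrix.isClosed_setOf_posSemidef : IsClosed {M : Matrix n n R | M.PosSemidef} := by
  simp only [posSemidef_iff_dotProduct_mulVec, Set.ofPred_and, Set.ofPred_forall]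
  refine .inter (isClosed_eq continuous_id.matrix_conjTranspose continuous_id)
    (isClosed_iInter fun x => isClosed_le continuous_const ?_)
  exact continuous_const.dotProduct (continuous_id.matrix_mulVec continuous_const)

theorem Matrix.PosSemidef.of_eq_conjTranspose_mul_mul_add [DecidableEq n] [AddLeftMono R]
    {A D S : Matrix n n R} (hA : Tendsto (A ^ ·) atTop (𝓝 0)) (hS : S.PosSemidef)
    (hD : D = Aᴴ * D * A + S) : D.PosSemidef := by
  have hlim : Tendsto (fun N => D - star (A ^ N) * D * A ^ N) atTop (𝓝 D) := by
    simpa using tendsto_const_nhds.sub ((hA.star.mul tendsto_const_nhds).mul hA)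
  refine isClosed_setOf_posSemidef.mem_of_tendsto hlim (.of_forall fun N => ?_)
  have hsum : D - star (A ^ N) * D * A ^ N = ∑ k ∈ Finset.range N, star (A ^ k) * S * A ^ k :=
    sub_eq_iff_eq_add'.mpr (eq_star_pow_mul_mul_pow_add_sum hD N)
  rw [Set.mem_ofPred_eq, hsum]
  exact posSemidef_sum _ fun k _ => hS.conjTranspose_mul_mul_same _

end

theorem lyapunov_solution_trace_maximizing_general {n : ℕ}
    (Ac Q Pstar P : Matrix (Fin n) (Fin n) ℝ)
    (hAc : SchurStableR Ac)
    (hPstarEq : Acᵀ * Pstar * Ac - Pstar + Q = 0)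
    (hPineq : (Acᵀ * P * Ac - P + Q).PosSemidef) :
    (Pstar - P).PosSemidef ∧ P.trace ≤ Pstar.trace := by
  have hD : Pstar - P = Acᴴ * (Pstar - P) * Ac + (Acᵀ * P * Ac - P + Q) :=
    calc Pstar - P = Pstar - P + (Acᵀ * Pstar * Ac - Pstar + Q) := by rw [hPstarEq, add_zero]
      _ = Acᴴ * (Pstar - P) * Ac + (Acᵀ * P * Ac - P + Q) := by
        rw [conjTranspose_eq_transpose_of_trivial, Matrix.mul_sub, Matrix.sub_mul]
        abel
  have hDpsd : (Pstar - P).PosSemidef :=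
    .of_eq_conjTranspose_mul_mul_add hAc.tendsto_pow_atTop_nhds_zero hPineq hD
  refine ⟨hDpsd, ?_⟩
  simpa [trace_sub, sub_nonneg] using hDpsd.trace_nonneg

/-- the solution `P*` of the Lyapunov equation associated with a Schur stable
closed-loop matrix `A_c` dominates, in the Loewner order, every symmetric PSD `P` satisfying
the Lyapunov inequality `A_cᵀ P A_c - P + Q ⪰ 0`; in particular it maximizes the trace. -/
theorem lyapunov_solution_trace_maximizing {n : ℕ}
    (Ac Q Pstar P : Matrix (Fin n) (Fin n) ℝ)
    (hAc : SchurStableR Ac)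
    (hQsymm : Q.IsSymm)
    (hPstarSymm : Pstar.IsSymm)
    (hPstarEq : Acᵀ * Pstar * Ac - Pstar + Q = 0)
    (hPsymm : P.IsSymm) (hPpsd : P.PosSemidef)
    (hPineq : (Acᵀ * P * Ac - P + Q).PosSemidef) :
    (Pstar - P).PosSemidef ∧ P.trace ≤ Pstar.trace :=
  lyapunov_solution_trace_maximizing_general Ac Q Pstar P hAc hPstarEq hPineq
end
end

section
/- Let F be a Schur stable real n×n matrix and F₁ : ℕ → ℝ^{n×n} a matrix-valued sequence for which there exist constants C ≥ 0 and ρ ∈ [0,1) with ‖F₁(t)‖ ≤ C·ρᵗ for all t ∈ ℕ. Then every sequence x : ℕ → ℝⁿ satisfying x(t+1) = F·x(t) + F₁(t)·x(t) for all t converges to 0 as t → ∞. -/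
open Matrix
open scoped Matrix.Norms.L2Operator

noncomputable section

/-!
By Gelfand's formula, a spectral radius below `r < 1` gives `‖F ^ t‖ ≤ K r ^ t`. Variation of
constants writes `x t` as `F ^ t x 0` plus a convolution of powers of `F` with the perturbation,
so `‖x t‖ / r ^ t` satisfies a discrete Grönwall inequality whose coefficients are proportional
to `‖F₁ s‖`. These are summable, so `‖x t‖ / r ^ t` stays bounded and `x t = O(r ^ t)`.
-/

open Filter Finset Asymptotics WithLp
open scoped NNReal ENNReal

theorem eq_pow_smul_add_sum_of_succ_eq {R M : Type*} [Monoid R] [AddCommMonoid M]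
    [DistribMulAction R M] {a : R} {x y : ℕ → M} (h : ∀ t, x (t + 1) = a • x t + y t)
    (t : ℕ) : x t = a ^ t • x 0 + ∑ s ∈ range t, a ^ (t - 1 - s) • y s := by
  induction t with
  | zero => simp
  | succ t ih =>
    rw [h, ih, smul_add, smul_sum, sum_range_succ, ← mul_smul, ← pow_succ', Nat.add_sub_cancel,
      Nat.sub_self, pow_zero, one_smul, add_assoc]
    congr 2
    refine sum_congr rfl fun s hs => ?_
    rw [← mul_smul, ← pow_succ']
    congr 2
    have := mem_range.mp hs
    omega

theorem le_mul_exp_sum_of_le_add_sum {a : ℝ} {b c : ℕ → ℝ} (ha : 0 ≤ a) (hc : ∀ s, 0 ≤ c s)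
    (h : ∀ t, b t ≤ a + ∑ s ∈ range t, c s * b s) (t : ℕ) :
    b t ≤ a * Real.exp (∑ s ∈ range t, c s) := by
  -- the right-hand side of `h` obeys the recursive form of Grönwall's inequality
  have hrhs : ∀ t ≥ 0, a + ∑ s ∈ range (t + 1), c s * b s
      ≤ (1 + c t) * (a + ∑ s ∈ range t, c s * b s) + 0 := fun t _ => by
    rw [sum_range_succ]
    nlinarith [h t, hc t]
  have hgron := discrete_gronwall (u := fun t => a + ∑ s ∈ range t, c s * b s)
    (by simpa using ha) hrhs (fun s _ => hc s) (fun _ _ => le_rfl) (Nat.zero_le t)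
  simp only [range_zero, sum_empty, add_zero, sum_const_zero, ← range_eq_Ico] at hgron
  exact (h t).trans hgron

theorem exists_norm_pow_le_mul_pow_of_spectralRadius_lt {A : Type*} [NormedRing A]
    [NormedAlgebra ℂ A] [CompleteSpace A] {a : A} {r : ℝ≥0} (h : spectralRadius ℂ a < r) :
    ∃ K, ∀ t : ℕ, ‖a ^ t‖ ≤ K * (r : ℝ) ^ t := by
  have hr : 0 < (r : ℝ) := by exact_mod_cast (pos_of_gt h : (0 : ℝ≥0∞) < r)
  have hev : ∀ᶠ t : ℕ in atTop, ‖a ^ t‖ ≤ 1 * (r : ℝ) ^ t := by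
    have hgelfand := spectrum.pow_norm_pow_one_div_tendsto_nhds_spectralRadius a
    filter_upwards [hgelfand.eventually_lt_const h, eventually_gt_atTop 0] with t ht ht0
    rw [← ENNReal.ofReal_coe_nnreal, ENNReal.ofReal_lt_ofReal_iff hr, one_div,
      Real.rpow_inv_lt_iff_of_pos (norm_nonneg _) hr.le (by positivity), Real.rpow_natCast] at ht
    linarith
  have hO : (fun t : ℕ => a ^ t) =O[cofinite] fun t => (r : ℝ) ^ t := by
    rw [Nat.cofinite_eq_atTop]
    exact IsBigO.of_bound 1 (by simpa [abs_of_pos hr] using hev)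
  obtain ⟨K, hK⟩ := (isBigO_cofinite_iff fun t ht => absurd ht (pow_ne_zero t hr.ne')).mp hO
  exact ⟨K, fun t => by simpa [abs_of_pos hr] using hK t⟩

theorem SchurStable.spectralRadius_lt_one {m : Type*} [Fintype m] [DecidableEq m]
    {M : Matrix m m ℂ} (hM : SchurStable M) : spectralRadius ℂ M < 1 := by
  rcases (spectrum ℂ M).eq_empty_or_nonempty with h | h
  · simp [spectralRadius, h]
  · exact spectrum.spectralRadius_lt_of_forall_lt_of_nonempty h fun k hk => by
      exact_mod_cast hM k hk

theorem norm_toLp_ofReal {n : Type*} [Fintype n] (v : EuclideanSpace ℝ n) :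
    ‖toLp 2 fun i => (v i : ℂ)‖ = ‖v‖ := by
  simp [EuclideanSpace.norm_eq]

theorem l2_opNorm_le_l2_opNorm_map_ofReal {m n : Type*} [Fintype m] [Fintype n] [DecidableEq n]
    (A : Matrix m n ℝ) : ‖A‖ ≤ ‖A.map Complex.ofReal‖ := by
  rw [l2_opNorm_def]
  refine ContinuousLinearMap.opNorm_le_bound _ (norm_nonneg _) fun v => ?_
  have := l2_opNorm_mulVec (A.map Complex.ofReal) (toLp 2 fun i => (v i : ℂ))
  rw [norm_toLp_ofReal] at this
  rw [← norm_toLp_ofReal]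
  convert this using 3
  ext i
  simp [Matrix.mulVec, dotProduct]

theorem SchurStableR.exists_norm_pow_le_mul_pow {n : Type*} [Fintype n] [DecidableEq n]
    {F : Matrix n n ℝ} (hF : SchurStableR F) :
    ∃ r : ℝ, 0 < r ∧ r < 1 ∧ ∃ K, ∀ t : ℕ, ‖F ^ t‖ ≤ K * r ^ t := by
  obtain ⟨r, hFr, hr1⟩ := ENNReal.lt_iff_exists_nnreal_btwn.mp hF.spectralRadius_lt_one
  obtain ⟨K, hK⟩ := exists_norm_pow_le_mul_pow_of_spectralRadius_lt hFr
  refine ⟨r, by exact_mod_cast pos_of_gt hFr, by exact_mod_cast hr1, K, fun t => ?_⟩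
  have hpow : (F ^ t).map Complex.ofReal = F.map Complex.ofReal ^ t :=
    map_pow Complex.ofRealHom.mapMatrix F t
  exact (l2_opNorm_le_l2_opNorm_map_ofReal _).trans (hpow ▸ hK t)

section PerturbedRecurrence

variable {𝕜 E : Type*} [NontriviallyNormedField 𝕜] [NormedAddCommGroup E] [NormedSpace 𝕜 E]
  {A : E →L[𝕜] E} {B : ℕ → E →L[𝕜] E} {x : ℕ → E} {K r : ℝ}

theorem norm_div_pow_le_of_perturbed_recurrence (hr : 0 < r) (hA : ∀ t, ‖A ^ t‖ ≤ K * r ^ t)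
    (hx : ∀ t, x (t + 1) = A (x t) + B t (x t)) (t : ℕ) :
    ‖x t‖ / r ^ t ≤ K * ‖x 0‖ + ∑ s ∈ range t, K / r * ‖B s‖ * (‖x s‖ / r ^ s) := by
  have hK : 0 ≤ K := by simpa using (norm_nonneg _).trans (hA 0)
  have hterm : ∀ s ∈ range t, ‖(A ^ (t - 1 - s)) (B s (x s))‖ / r ^ t
      ≤ K / r * ‖B s‖ * (‖x s‖ / r ^ s) := fun s hs => by
    have hrt : r ^ t = r ^ (t - 1 - s) * r ^ s * r := by
      rw [← pow_add, ← pow_succ]; congr 1; have := mem_range.mp hs; omega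
    calc ‖(A ^ (t - 1 - s)) (B s (x s))‖ / r ^ t
        ≤ K * r ^ (t - 1 - s) * (‖B s‖ * ‖x s‖) / r ^ t := by
          gcongr
          exact (A ^ (t - 1 - s)).le_of_opNorm_le (hA _) _ |>.trans
            (by gcongr; exact (B s).le_opNorm _)
      _ = K / r * ‖B s‖ * (‖x s‖ / r ^ s) := by rw [hrt]; field_simp
  calc ‖x t‖ / r ^ t
      ≤ (‖(A ^ t) (x 0)‖ + ∑ s ∈ range t, ‖(A ^ (t - 1 - s)) (B s (x s))‖) / r ^ t := by
        rw [eq_pow_smul_add_sum_of_succ_eq (a := A) (y := fun s => B s (x s)) hx t]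
        gcongr
        exact (norm_add_le _ _).trans (add_le_add_right (norm_sum_le _ _) _)
    _ ≤ K * ‖x 0‖ + ∑ s ∈ range t, K / r * ‖B s‖ * (‖x s‖ / r ^ s) := by
        rw [add_div, sum_div]
        gcongr with s hs
        · rw [div_le_iff₀ (by positivity)]
          linarith [(A ^ t).le_of_opNorm_le (hA t) (x 0)]
        · exact hterm s hs

theorem isBigO_pow_of_perturbed_recurrence (hr : 0 < r) (hA : ∀ t, ‖A ^ t‖ ≤ K * r ^ t)
    (hB : Summable fun t => ‖B t‖) (hx : ∀ t, x (t + 1) = A (x t) + B t (x t)) :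
    x =O[atTop] fun t => r ^ t := by
  have hK : 0 ≤ K := by simpa using (norm_nonneg _).trans (hA 0)
  have hc : Summable fun s => K / r * ‖B s‖ := hB.mul_left _
  refine IsBigO.of_bound (K * ‖x 0‖ * Real.exp (∑' s, K / r * ‖B s‖))
    (Eventually.of_forall fun t => ?_)
  have hgron := le_mul_exp_sum_of_le_add_sum (by positivity) (fun s => by positivity)
    (norm_div_pow_le_of_perturbed_recurrence hr hA hx) t
  rw [div_le_iff₀ (by positivity)] at hgron
  rw [Real.norm_of_nonneg (by positivity)]
  refine hgron.trans ?_
  gcongr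
  exact hc.sum_le_tsum _ fun s _ => by positivity

end PerturbedRecurrence

theorem schur_stable_plus_vanishing_perturbation_general {n : ℕ}
    (F : Matrix (Fin n) (Fin n) ℝ) (hF : SchurStableR F)
    (F₁ : ℕ → Matrix (Fin n) (Fin n) ℝ)
    (C ρ : ℝ) (hρ0 : 0 ≤ ρ) (hρ1 : ρ < 1)
    (hbound : ∀ t : ℕ, ‖F₁ t‖ ≤ C * ρ ^ t)
    (x : ℕ → Fin n → ℝ)
    (hdyn : ∀ t : ℕ, x (t + 1) = F.mulVec (x t) + (F₁ t).mulVec (x t)) :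
    Filter.Tendsto x Filter.atTop (nhds 0) := by
  obtain ⟨r, hr0, hr1, K, hK⟩ := hF.exists_norm_pow_le_mul_pow
  have hA : ∀ t, ‖toEuclideanCLM (𝕜 := ℝ) F ^ t‖ ≤ K * r ^ t := fun t => by
    rw [← map_pow, l2_opNorm_toEuclideanCLM]
    exact hK t
  have hB : Summable fun t => ‖toEuclideanCLM (𝕜 := ℝ) (F₁ t)‖ :=
    .of_nonneg_of_le (fun _ => norm_nonneg _) hbound
      ((summable_geometric_of_lt_one hρ0 hρ1).mul_left C)
  have hy := isBigO_pow_of_perturbed_recurrence (x := fun t => toLp 2 (x t)) hr0 hA hB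
    fun t => by simp [hdyn]
  exact ((PiLp.continuous_ofLp 2 _).tendsto 0).comp
    (hy.trans_tendsto (tendsto_pow_atTop_nhds_zero_of_lt_one hr0.le hr1))

/-- Lemma 3 of the paper: a Schur stable linear system perturbed by an
exponentially vanishing time-varying term still drives the state to zero.  Here `‖·‖` is
the L2 operator norm on matrices. -/
theorem schur_stable_plus_vanishing_perturbation {n : ℕ}
    (F : Matrix (Fin n) (Fin n) ℝ) (hF : SchurStableR F)
    (F₁ : ℕ → Matrix (Fin n) (Fin n) ℝ)
    (C ρ : ℝ) (hC : 0 ≤ C) (hρ0 : 0 ≤ ρ) (hρ1 : ρ < 1)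
    (hbound : ∀ t : ℕ, ‖F₁ t‖ ≤ C * ρ ^ t)
    (x : ℕ → Fin n → ℝ)
    (hdyn : ∀ t : ℕ, x (t + 1) = F.mulVec (x t) + (F₁ t).mulVec (x t)) :
    Filter.Tendsto x Filter.atTop (nhds 0) :=
  schur_stable_plus_vanishing_perturbation_general F hF F₁ C ρ hρ0 hρ1 hbound x hdyn
end
end

section
/- Let A ∈ ℝ^{n×n}, T ∈ ℝ^{n×m}, K ∈ ℝ^{q×n}, ϱ > 0, and let P ∈ ℝ^{n×n} be symmetric positive definite. Then the following are equivalent: (i) for every F ∈ ℝ^{m×q} with FᵀF ⪯ ϱ²·I_q, the matrix P(A + T F K)ᵀ + (A + T F K)P is negative definite; (ii) there exists a scalar q₀ > 0 such that P Aᵀ + A P + (1/q₀)·P Kᵀ K P + q₀·ϱ²·T Tᵀ is negative definite. -/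
open Matrix Filter Topology

/-!
Write `M = A P` and `L = K P`. Since a rank-one `F` can send `L x` to any `w` with
`|w|² ≤ ϱ² |L x|²`, condition (i) says that the quadratic form `Q (x, w) = 2 xᵀ (M x + T w)` is
negative on the cone `R (x, w) = ϱ² |L x|² - |w|² ≥ 0` minus the origin. Completing the square in
`w` shows that the matrix inequality (ii) with parameter `q₀` says that `Q + c R` is negative
definite for `c = (q₀ ϱ²)⁻¹`. The two are equivalent by the strict S-lemma. Its proof is a
compactness argument on the unit sphere, resting on a two-dimensional fact: for `R x > 0 > R y`,
the line `σ x + y` meets the cone `R = 0` on both sides of `y`, where `Q < 0`, and this keeps the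
multipliers forced by points with `R < 0` below those allowed by points with `R > 0`.
-/

theorem exists_quadratic_roots_of_pos_of_neg {a b c : ℝ} (ha : 0 < a) (hc : c < 0) :
    ∃ s t : ℝ, s < 0 ∧ 0 < t ∧ a * (s * s) + b * s + c = 0 ∧ a * (t * t) + b * t + c = 0 := by
  obtain ⟨d, hd0, hd⟩ : ∃ d : ℝ, 0 ≤ d ∧ discrim a b c = d * d :=
    ⟨_, Real.sqrt_nonneg _, (Real.mul_self_sqrt (by unfold discrim; nlinarith)).symm⟩
  have hbd : |b| < d := abs_lt_of_sq_lt_sq (by rw [sq d, ← hd, discrim]; nlinarith) hd0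
  obtain ⟨hb₁, hb₂⟩ := abs_lt.mp hbd
  refine ⟨(-b - d) / (2 * a), (-b + d) / (2 * a),
    div_neg_of_neg_of_pos (by linarith) (by positivity), div_pos (by linarith) (by positivity),
    (quadratic_eq_zero_iff ha.ne' hd _).mpr (Or.inr rfl),
    (quadratic_eq_zero_iff ha.ne' hd _).mpr (Or.inl rfl)⟩

namespace QuadraticMap

variable {V : Type*} [AddCommGroup V] [Module ℝ V]

theorem apply_smul_add (Q : QuadraticForm ℝ V) (σ : ℝ) (x y : V) :
    Q (σ • x + y) = Q x * (σ * σ) + polar Q x y * σ + Q y := by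
  rw [QuadraticMap.map_add Q, QuadraticMap.map_smul, polar_smul_left, smul_eq_mul, smul_eq_mul]
  ring

/-- The lower bound `Q y / -R y` that a point with `R y < 0` forces on a multiplier `c` with
`Q + c R < 0` stays below the upper bound `-Q x / R x` forced by a point with `R x > 0`. -/
theorem mul_lt_mul_of_neg_on_nonneg {Q R : QuadraticForm ℝ V}
    (h : ∀ z ≠ 0, 0 ≤ R z → Q z < 0) {x y : V} (hx : 0 < R x) (hy : R y < 0) :
    Q y * R x < Q x * R y := by
  obtain ⟨s, t, hs, ht, hRs, hRt⟩ :=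
    exists_quadratic_roots_of_pos_of_neg (b := polar R x y) hx hy
  have hQ : ∀ σ, R x * (σ * σ) + polar R x y * σ + R y = 0 → Q (σ • x + y) < 0 := by
    intro σ hσ
    refine h _ (fun h0 => ?_) (by rw [apply_smul_add]; linarith)
    rw [eq_neg_of_add_eq_zero_right h0, QuadraticMap.map_neg, QuadraticMap.map_smul,
      smul_eq_mul] at hy
    nlinarith [mul_self_nonneg σ]
  -- `σ ↦ R x * Q (σ • x + y) - Q x * R (σ • x + y)` is affine, and negative at `s < 0 < t`
  have affine : ∀ σ, R x * Q (σ • x + y) - Q x * R (σ • x + y) =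
      (R x * polar Q x y - Q x * polar R x y) * σ + (R x * Q y - Q x * R y) := by
    intro σ
    rw [apply_smul_add, apply_smul_add]
    ring
  have hneg : ∀ σ, R x * (σ * σ) + polar R x y * σ + R y = 0 →
      (R x * polar Q x y - Q x * polar R x y) * σ + (R x * Q y - Q x * R y) < 0 := by
    intro σ hσ
    rw [← affine, apply_smul_add R, hσ, mul_zero, sub_zero]
    exact mul_neg_of_pos_of_neg hx (hQ σ hσ)
  nlinarith [hneg s hRs, hneg t hRt]

end QuadraticMap

theorem IsCompact.exists_pos_forall_add_mul_neg {X : Type*} [TopologicalSpace X] {K : Set X}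
    (hK : IsCompact K) {f g : X → ℝ} (hf : Continuous f) (hg : Continuous g)
    (h : ∀ x ∈ K, f x < 0) : ∃ ε > 0, ∀ x ∈ K, f x + ε * g x < 0 := by
  have hnhds : ∀ᶠ ε in 𝓝 (0 : ℝ), ∀ x ∈ K, f x + ε * g x < 0 :=
    hK.eventually_forall_of_forall_eventually fun x hx =>
      (hf.comp continuous_snd).add (continuous_fst.mul (hg.comp continuous_snd))
        |>.continuousAt.eventually_lt continuousAt_const (by simpa using h x hx)
  obtain ⟨ε, hεK, hε⟩ := ((eventually_nhdsWithin_of_eventually_nhds hnhds).and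
    (self_mem_nhdsWithin : Set.Ioi (0 : ℝ) ∈ 𝓝[>] 0)).exists
  exact ⟨ε, hε, hεK⟩

section SLemma

variable {V : Type*} [NormedAddCommGroup V] [NormedSpace ℝ V]

theorem exists_mem_sphere_forall_quadraticForm_apply_eq {x : V} (hx : x ≠ 0) :
    ∃ u ∈ Metric.sphere (0 : V) 1, ∃ c > 0, ∀ Q : QuadraticForm ℝ V, Q x = c * Q u := by
  refine ⟨‖x‖⁻¹ • x, by simpa using norm_smul_inv_norm (𝕜 := ℝ) hx, ‖x‖ * ‖x‖,
    by positivity, fun Q => ?_⟩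
  rw [← smul_eq_mul, ← QuadraticMap.map_smul, smul_smul,
    mul_inv_cancel₀ (norm_ne_zero_iff.mpr hx), one_smul]

variable [FiniteDimensional ℝ V]

namespace QuadraticMap

theorem continuous_of_finiteDimensional (Q : QuadraticForm ℝ V) : Continuous Q := by
  have hB := ((LinearMap.toContinuousLinearMap : (V →ₗ[ℝ] ℝ) ≃ₗ[ℝ] V →L[ℝ] ℝ).toLinearMap ∘ₗ
    associated Q).continuous_of_finiteDimensional
  convert hB.clm_apply continuous_id with x
  simp [associated_eq_self_apply]

theorem exists_pos_add_mul_neg_on_nonneg {Q R : QuadraticForm ℝ V}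
    (h : ∀ x ≠ 0, 0 ≤ R x → Q x < 0) : ∃ ε > 0, ∀ x ≠ 0, 0 ≤ R x → Q x + ε * R x < 0 := by
  have hK : IsCompact (Metric.sphere (0 : V) 1 ∩ {x | 0 ≤ R x}) :=
    (isCompact_sphere 0 1).inter_right
      (isClosed_le continuous_const R.continuous_of_finiteDimensional)
  obtain ⟨ε, hε, hK⟩ := hK.exists_pos_forall_add_mul_neg Q.continuous_of_finiteDimensional
    R.continuous_of_finiteDimensional fun u hu => h u (ne_zero_of_mem_unit_sphere ⟨u, hu.1⟩) hu.2
  refine ⟨ε, hε, fun x hx hRx => ?_⟩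
  obtain ⟨u, hu, c, hc, hx⟩ := exists_mem_sphere_forall_quadraticForm_apply_eq hx
  rw [hx Q, hx R] at *
  have := hK u ⟨hu, nonneg_of_mul_nonneg_right hRx hc⟩
  nlinarith

theorem exists_nonneg_add_mul_nonpos_and_neg {Q R : QuadraticForm ℝ V}
    (h : ∀ x ≠ 0, 0 ≤ R x → Q x < 0) :
    ∃ A ≥ 0, (∀ x, R x ≤ 0 → Q x + A * R x ≤ 0) ∧ ∀ x ≠ 0, 0 ≤ R x → Q x + A * R x < 0 := by
  have hQ := Q.continuous_of_finiteDimensional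
  have hR := R.continuous_of_finiteDimensional
  set U := Metric.sphere (0 : V) 1 ∩ {u | R u ≤ 0 ∧ 0 ≤ Q u}
  have hRU : ∀ u ∈ U, R u < 0 := fun u hu => hu.2.1.lt_of_ne fun h0 =>
    (h u (ne_zero_of_mem_unit_sphere ⟨u, hu.1⟩) h0.ge).not_ge hu.2.2
  have hU : IsCompact U := (isCompact_sphere 0 1).inter_right
    ((isClosed_le hR continuous_const).inter (isClosed_le continuous_const hQ))
  set S := insert 0 ((fun u => Q u / -R u) '' U)
  have hS : IsCompact S := (hU.image_of_continuousOn (hQ.continuousOn.div hR.neg.continuousOn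
    fun u hu => (neg_pos.mpr (hRU u hu)).ne')).insert 0
  have hle : ∀ a ∈ S, a ≤ sSup S := fun a ha => le_csSup hS.bddAbove ha
  refine ⟨sSup S, hle 0 (Set.mem_insert _ _), fun x hRx => ?_, fun x hx hRx => ?_⟩
  · rcases eq_or_ne x 0 with rfl | hx
    · simp
    obtain ⟨u, hu, c, hc, hx⟩ := exists_mem_sphere_forall_quadraticForm_apply_eq hx
    rw [hx Q, hx R] at *
    have hRu : R u ≤ 0 := nonpos_of_mul_nonpos_right hRx hc
    suffices Q u + sSup S * R u ≤ 0 by nlinarith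
    by_cases hQu : 0 ≤ Q u
    · have hu : u ∈ U := ⟨hu, hRu, hQu⟩
      have := hle _ (Set.mem_insert_of_mem _ ⟨u, hu, rfl⟩)
      rw [div_le_iff₀ (neg_pos.mpr (hRU u hu))] at this
      linarith
    · nlinarith [hle 0 (Set.mem_insert _ _)]
  rcases hRx.lt_or_eq with hRx | hRx
  · rcases hS.sSup_mem ⟨0, Set.mem_insert _ _⟩ with hA | ⟨u, hu, hA⟩
    · rw [hA, zero_mul, add_zero]
      exact h x hx hRx.le
    · have hRu := hRU u hu
      have hAu : sSup S * -R u = Q u := by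
        rw [← hA]
        exact div_mul_cancel₀ _ (neg_pos.mpr hRu).ne'
      nlinarith [mul_lt_mul_of_neg_on_nonneg h hRx hRu]
  · rw [← hRx, mul_zero, add_zero]
    exact h x hx hRx.le

theorem exists_pos_add_mul_neg_iff {Q R : QuadraticForm ℝ V} :
    (∀ x ≠ 0, 0 ≤ R x → Q x < 0) ↔ ∃ c > 0, ∀ x ≠ 0, Q x + c * R x < 0 := by
  refine ⟨fun h => ?_, fun ⟨c, hc, h⟩ x hx hRx => by nlinarith [h x hx]⟩
  obtain ⟨A, hA, hle, hlt⟩ := exists_nonneg_add_mul_nonpos_and_neg h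
  obtain ⟨ε, hε, hεlt⟩ :=
    exists_pos_add_mul_neg_on_nonneg (Q := Q + A • R) (R := R) (by simpa using hlt)
  refine ⟨A + ε, by positivity, fun x hx => ?_⟩
  rcases le_or_gt 0 (R x) with hRx | hRx
  · have := hεlt x hx hRx
    simp only [_root_.add_apply, _root_.smul_apply, smul_eq_mul] at this
    linarith
  · nlinarith [hle x hRx.le]

end QuadraticMap

end SLemma

namespace Matrix

variable {n m p : Type*} [Fintype n] [Fintype m] [Fintype p]

theorem dotProduct_sq_le (v w : n → ℝ) : (v ⬝ᵥ w) ^ 2 ≤ (v ⬝ᵥ v) * (w ⬝ᵥ w) := by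
  simpa [dotProduct, sq] using Finset.sum_mul_sq_le_sq_mul_sq Finset.univ v w

theorem dotProduct_self_nonneg (v : n → ℝ) : 0 ≤ v ⬝ᵥ v := by
  simpa using dotProduct_star_self_nonneg v

theorem neg_posDef_iff {N : Matrix n n ℝ} :
    (-N).PosDef ↔ N.IsSymm ∧ ∀ x ≠ 0, x ⬝ᵥ N *ᵥ x < 0 := by
  simp [posDef_iff_dotProduct_mulVec, neg_mulVec]

theorem isSymm_mul_transpose_add_mul {P : Matrix n n ℝ} (hP : P.IsSymm) (B : Matrix n n ℝ) :
    (P * Bᵀ + B * P).IsSymm := by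
  simp [IsSymm, transpose_mul, hP.eq, add_comm]

theorem dotProduct_mul_transpose_add_mul_mulVec {P : Matrix n n ℝ} (hP : P.IsSymm)
    (B : Matrix n n ℝ) (x : n → ℝ) :
    x ⬝ᵥ (P * Bᵀ + B * P) *ᵥ x = 2 * (x ⬝ᵥ (B * P) *ᵥ x) := by
  rw [← hP.eq, ← transpose_mul, hP.eq, add_mulVec, dotProduct_add, dotProduct_transpose_mulVec]
  ring

theorem dotProduct_transpose_mul_self_mulVec (B : Matrix m n ℝ) (x : n → ℝ) :
    x ⬝ᵥ (Bᵀ * B) *ᵥ x = B *ᵥ x ⬝ᵥ B *ᵥ x := by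
  rw [← mulVec_mulVec, dotProduct_transpose_mulVec]

variable [DecidableEq p]

theorem posSemidef_smul_one_sub_transpose_mul_self_iff (r : ℝ) (F : Matrix m p ℝ) :
    (r • 1 - Fᵀ * F).PosSemidef ↔ ∀ u, F *ᵥ u ⬝ᵥ F *ᵥ u ≤ r * (u ⬝ᵥ u) := by
  have hquad (u : p → ℝ) : u ⬝ᵥ (r • 1 - Fᵀ * F) *ᵥ u = r * (u ⬝ᵥ u) - F *ᵥ u ⬝ᵥ F *ᵥ u := by
    rw [sub_mulVec, smul_mulVec, one_mulVec, ← mulVec_mulVec, dotProduct_sub, dotProduct_smul,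
      smul_eq_mul, dotProduct_transpose_mulVec, dotProduct_comm]
  have hsymm : (r • 1 - Fᵀ * F).IsSymm := by simp [IsSymm, transpose_sub, transpose_mul]
  simp [posSemidef_iff_dotProduct_mulVec, hsymm, hquad]

theorem exists_posSemidef_smul_one_sub_and_mulVec_eq {r : ℝ} (hr : 0 ≤ r) {v : p → ℝ}
    {w : m → ℝ} (hvw : w ⬝ᵥ w ≤ r * (v ⬝ᵥ v)) :
    ∃ F : Matrix m p ℝ, (r • 1 - Fᵀ * F).PosSemidef ∧ F *ᵥ v = w := by
  -- `F = w vᵀ / (v ⬝ᵥ v)`; for `v = 0` the junk value `0⁻¹ = 0` gives `F = 0`, and then `w = 0`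
  have hFu (u : p → ℝ) : ((v ⬝ᵥ v)⁻¹ • vecMulVec w v) *ᵥ u = ((v ⬝ᵥ v)⁻¹ * (v ⬝ᵥ u)) • w := by
    rw [smul_mulVec, vecMulVec_mulVec, op_smul_eq_smul, smul_smul]
  refine ⟨(v ⬝ᵥ v)⁻¹ • vecMulVec w v,
    (posSemidef_smul_one_sub_transpose_mul_self_iff r _).mpr fun u => ?_, ?_⟩
  · rw [hFu, dotProduct_smul, smul_dotProduct, smul_eq_mul, smul_eq_mul]
    rcases (dotProduct_self_nonneg v).eq_or_lt with hv | hv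
    · rw [← hv]
      simpa using mul_nonneg hr (dotProduct_self_nonneg u)
    · calc (v ⬝ᵥ v)⁻¹ * (v ⬝ᵥ u) * ((v ⬝ᵥ v)⁻¹ * (v ⬝ᵥ u) * (w ⬝ᵥ w))
          = (v ⬝ᵥ u) ^ 2 * (w ⬝ᵥ w) / (v ⬝ᵥ v) ^ 2 := by field_simp
        _ ≤ ((v ⬝ᵥ v) * (u ⬝ᵥ u)) * (r * (v ⬝ᵥ v)) / (v ⬝ᵥ v) ^ 2 := by
          gcongr
          · exact dotProduct_self_nonneg w
          · exact mul_nonneg hv.le (dotProduct_self_nonneg u)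
          · exact dotProduct_sq_le v u
        _ = r * (u ⬝ᵥ u) := by field_simp
  · rw [hFu]
    rcases eq_or_ne v 0 with rfl | hv
    · simp only [dotProduct_zero, mul_zero, zero_smul] at hvw ⊢
      exact (dotProduct_self_eq_zero.mp (hvw.antisymm (dotProduct_self_nonneg w))).symm
    · rw [inv_mul_cancel₀ (by simpa using hv), one_smul]

end Matrix

section RobustLyapunov

variable {n m p : Type*} [Fintype n] [Fintype m] [Fintype p]

def robustLyapunovForm (M : Matrix n n ℝ) (T : Matrix n m ℝ) :
    QuadraticForm ℝ ((n → ℝ) × (m → ℝ)) :=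
  LinearMap.BilinMap.toQuadraticMap <|
    LinearMap.mk₂ ℝ (fun ξ η => 2 * (ξ.1 ⬝ᵥ (M *ᵥ η.1 + T *ᵥ η.2)))
      (fun _ _ _ => by simp only [Prod.fst_add, add_dotProduct]; ring)
      (fun _ _ _ => by simp only [Prod.smul_fst, smul_dotProduct, smul_eq_mul]; ring)
      (fun _ _ _ => by simp only [Prod.fst_add, Prod.snd_add, mulVec_add, dotProduct_add]; ring)
      (fun _ _ _ => by
        simp only [Prod.smul_fst, Prod.smul_snd, mulVec_smul, ← smul_add, dotProduct_smul,
          smul_eq_mul]; ring)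

def gainBoundForm (r : ℝ) (L : Matrix p n ℝ) : QuadraticForm ℝ ((n → ℝ) × (m → ℝ)) :=
  LinearMap.BilinMap.toQuadraticMap <|
    LinearMap.mk₂ ℝ (fun ξ η => r * (L *ᵥ ξ.1 ⬝ᵥ L *ᵥ η.1) - ξ.2 ⬝ᵥ η.2)
      (fun _ _ _ => by simp only [Prod.fst_add, Prod.snd_add, mulVec_add, add_dotProduct]; ring)
      (fun _ _ _ => by
        simp only [Prod.smul_fst, Prod.smul_snd, mulVec_smul, smul_dotProduct, smul_eq_mul]; ring)
      (fun _ _ _ => by simp only [Prod.fst_add, Prod.snd_add, mulVec_add, dotProduct_add]; ring)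
      (fun _ _ _ => by
        simp only [Prod.smul_fst, Prod.smul_snd, mulVec_smul, dotProduct_smul, smul_eq_mul]; ring)

@[simp]
theorem robustLyapunovForm_apply (M : Matrix n n ℝ) (T : Matrix n m ℝ) (x : n → ℝ)
    (w : m → ℝ) :
    robustLyapunovForm M T (x, w) = 2 * (x ⬝ᵥ (M *ᵥ x + T *ᵥ w)) :=
  rfl

@[simp]
theorem gainBoundForm_apply (r : ℝ) (L : Matrix p n ℝ) (x : n → ℝ) (w : m → ℝ) :
    gainBoundForm r L (x, w) = r * (L *ᵥ x ⬝ᵥ L *ᵥ x) - w ⬝ᵥ w :=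
  rfl

theorem robustLyapunovForm_add_mul_gainBoundForm {c : ℝ} (hc : c ≠ 0) (M : Matrix n n ℝ)
    (T : Matrix n m ℝ) (r : ℝ) (L : Matrix p n ℝ) (x : n → ℝ) (w : m → ℝ) :
    robustLyapunovForm M T (x, w) + c * gainBoundForm r L (x, w) =
      2 * (x ⬝ᵥ M *ᵥ x) + c * r * (L *ᵥ x ⬝ᵥ L *ᵥ x) + c⁻¹ * (Tᵀ *ᵥ x ⬝ᵥ Tᵀ *ᵥ x) -
        c * ((w - c⁻¹ • Tᵀ *ᵥ x) ⬝ᵥ (w - c⁻¹ • Tᵀ *ᵥ x)) := by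
  rw [robustLyapunovForm_apply, gainBoundForm_apply, dotProduct_add,
    ← dotProduct_transpose_mulVec T w x]
  simp only [sub_dotProduct, dotProduct_sub, smul_dotProduct, dotProduct_smul, smul_eq_mul,
    dotProduct_comm (Tᵀ *ᵥ x) w]
  field_simp
  ring

variable {A P : Matrix n n ℝ} {T : Matrix n m ℝ} {K : Matrix p n ℝ}

theorem dotProduct_closedLoop_mulVec (hP : P.IsSymm) (F : Matrix m p ℝ) (x : n → ℝ) :
    x ⬝ᵥ (P * (A + T * F * K)ᵀ + (A + T * F * K) * P) *ᵥ x =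
      robustLyapunovForm (A * P) T (x, F *ᵥ ((K * P) *ᵥ x)) := by
  rw [dotProduct_mul_transpose_add_mul_mulVec hP, robustLyapunovForm_apply, Matrix.add_mul,
    add_mulVec, mulVec_mulVec, mulVec_mulVec, Matrix.mul_assoc, Matrix.mul_assoc]

theorem dotProduct_lmi_mulVec (hP : P.IsSymm) (a b : ℝ) (x : n → ℝ) :
    x ⬝ᵥ (P * Aᵀ + A * P + a • (P * Kᵀ * K * P) + b • (T * Tᵀ)) *ᵥ x =
      2 * (x ⬝ᵥ (A * P) *ᵥ x) + a * ((K * P) *ᵥ x ⬝ᵥ (K * P) *ᵥ x) +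
        b * (Tᵀ *ᵥ x ⬝ᵥ Tᵀ *ᵥ x) := by
  have hKP : P * Kᵀ * K * P = (K * P)ᵀ * (K * P) := by
    rw [transpose_mul, hP.eq, Matrix.mul_assoc, Matrix.mul_assoc]
  rw [add_mulVec, add_mulVec, dotProduct_add, dotProduct_add,
    dotProduct_mul_transpose_add_mul_mulVec hP, smul_mulVec, smul_mulVec, dotProduct_smul,
    dotProduct_smul, smul_eq_mul, smul_eq_mul, hKP, dotProduct_transpose_mul_self_mulVec,
    ← dotProduct_transpose_mul_self_mulVec Tᵀ, transpose_transpose]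

theorem neg_posDef_lmi_iff (hP : P.IsSymm) (r : ℝ) {c : ℝ} (hc : 0 < c) :
    (-(P * Aᵀ + A * P + (c * r) • (P * Kᵀ * K * P) + c⁻¹ • (T * Tᵀ))).PosDef ↔
      ∀ ξ ≠ 0, robustLyapunovForm (A * P) T ξ + c * gainBoundForm r (K * P) ξ < 0 := by
  have hsymm : (P * Aᵀ + A * P + (c * r) • (P * Kᵀ * K * P) + c⁻¹ • (T * Tᵀ)).IsSymm := by
    simp [IsSymm, transpose_mul, hP.eq, Matrix.mul_assoc, add_comm]
  rw [neg_posDef_iff, and_iff_right hsymm]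
  simp only [dotProduct_lmi_mulVec hP]
  constructor
  · rintro h ⟨x, w⟩ hξ
    rw [robustLyapunovForm_add_mul_gainBoundForm hc.ne']
    have hsq := dotProduct_self_nonneg (w - c⁻¹ • Tᵀ *ᵥ x)
    rcases eq_or_ne x 0 with rfl | hx
    · have hw : w ≠ 0 := fun hw => hξ (by rw [hw]; rfl)
      simpa [hc] using dotProduct_star_self_pos_iff.mpr hw
    · nlinarith [h x hx]
  · intro h x hx
    have := h (x, c⁻¹ • Tᵀ *ᵥ x) (by simp [hx])
    rwa [robustLyapunovForm_add_mul_gainBoundForm hc.ne', sub_self, dotProduct_zero, mul_zero,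
      sub_zero] at this

variable [DecidableEq p]

theorem forall_neg_posDef_closedLoop_iff {r : ℝ} (hr : 0 ≤ r) (hP : P.IsSymm) :
    (∀ F : Matrix m p ℝ, (r • 1 - Fᵀ * F).PosSemidef →
        (-(P * (A + T * F * K)ᵀ + (A + T * F * K) * P)).PosDef) ↔
      ∀ ξ ≠ 0, 0 ≤ gainBoundForm r (K * P) ξ → robustLyapunovForm (A * P) T ξ < 0 := by
  simp only [neg_posDef_iff, isSymm_mul_transpose_add_mul hP, true_and,
    dotProduct_closedLoop_mulVec hP]
  constructor
  · rintro h ⟨x, w⟩ hξ hR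
    rw [gainBoundForm_apply, sub_nonneg] at hR
    obtain ⟨F, hF, rfl⟩ := exists_posSemidef_smul_one_sub_and_mulVec_eq hr hR
    refine h F hF x fun hx => hξ ?_
    simp [hx]
  · intro h F hF x hx
    refine h _ (by simp [hx]) ?_
    rw [gainBoundForm_apply, sub_nonneg]
    exact (posSemidef_smul_one_sub_transpose_mul_self_iff r F).mp hF _

end RobustLyapunov

/-- Lemma 4 of the paper, a robust Lyapunov inequality equivalence:
the quadratic Lyapunov inequality `P(A + TFK)ᵀ + (A + TFK)P ≺ 0` holds uniformly over all
norm-bounded uncertainties `FᵀF ⪯ ϱ²I` if and only if a single scaled LMI holds. -/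
theorem robust_lyapunov_equivalence {n m q : ℕ}
    (A : Matrix (Fin n) (Fin n) ℝ) (T : Matrix (Fin n) (Fin m) ℝ)
    (K : Matrix (Fin q) (Fin n) ℝ) (ϱ : ℝ) (hϱ : 0 < ϱ)
    (P : Matrix (Fin n) (Fin n) ℝ) (hP : P.PosDef) :
    (∀ F : Matrix (Fin m) (Fin q) ℝ,
        (ϱ ^ 2 • (1 : Matrix (Fin q) (Fin q) ℝ) - Fᵀ * F).PosSemidef →
        (-(P * (A + T * F * K)ᵀ + (A + T * F * K) * P)).PosDef) ↔
      ∃ q₀ : ℝ, 0 < q₀ ∧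
        (-(P * Aᵀ + A * P + (1 / q₀) • (P * Kᵀ * K * P) + (q₀ * ϱ ^ 2) • (T * Tᵀ))).PosDef := by
  have hPsymm : P.IsSymm := isHermitian_iff_isSymm.mp hP.isHermitian
  rw [forall_neg_posDef_closedLoop_iff (sq_nonneg ϱ) hPsymm,
    QuadraticMap.exists_pos_add_mul_neg_iff]
  constructor
  · rintro ⟨c, hc, h⟩
    refine ⟨(c * ϱ ^ 2)⁻¹, by positivity, ?_⟩
    convert (neg_posDef_lmi_iff hPsymm (ϱ ^ 2) hc).mpr h using 5 <;> field_simp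
  · rintro ⟨q₀, hq₀, h⟩
    refine ⟨(q₀ * ϱ ^ 2)⁻¹, by positivity,
      (neg_posDef_lmi_iff hPsymm (ϱ ^ 2) (by positivity)).mp ?_⟩
    convert h using 5 <;> field_simp
end

section
/- Let A, B ∈ ℝ^{n×n} with B invertible, N ≥ 1, and for each i = 1,…,N let Q_i ≻ 0 and P_i ≻ 0 be symmetric with P_i = Aᵀ P_i A - Aᵀ P_i B (Bᵀ P_i B)⁻¹ Bᵀ P_i A + Q_i, and K_i = -(Bᵀ P_i B)⁻¹ Bᵀ P_i A. Let X_{i-} ∈ ℝ^{n×T}, U_{i-} ∈ ℝ^{n×T} be data with X_{i+} := A X_{i-} + B U_{i-}; let G_i ∈ ℝ^{T×n} satisfy U_{i-} G_i = K_i and X_{i-} G_i = 0, and let 𝒰_i ∈ ℝ^{T×n} satisfy X_{i-} 𝒰_i = Iₙ and U_{i-} 𝒰_i = K_i. Set K₀ = (1/N)·Σ K_i, P = Σ P_i, W_i = X_{i+}𝒰_i - X_{i+}G_i, R = Σ_{i=1}^N [ G_iᵀ X_{i+}ᵀ P_i X_{i+} G_i + W_iᵀ (P - P_i) W_i ], and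 F = Σ_{i=1}^N [ Q_i + (P - P_i) ]. Then F is symmetric positive definite, and if L̄ ∈ ℝ^{N×N} is a matrix all of whose complex eigenvalues η satisfy |η - 1|² · σ_max( F^{-1/2} R F^{-1/2} ) < 1, then the matrix I_N ⊗ A + L̄ ⊗ (B K₀) is Schur stable. -/
open Matrix
open scoped Kronecker Matrix.Norms.L2Operator

noncomputable section

section OldSqrt

open scoped ComplexOrder

/-- The positive semidefinite square root of a positive semidefinite matrix, as it was defined
in Mathlib (December 2024); it has since been removed from Mathlib. -/
def Matrix.PosSemidef.sqrt {n 𝕜 : Type*} [Fintype n] [DecidableEq n] [RCLike 𝕜]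
    {A : Matrix n n 𝕜} (hA : A.PosSemidef) : Matrix n n 𝕜 :=
  (hA.1.eigenvectorUnitary : Matrix n n 𝕜) *
    diagonal (fun i => ((Real.sqrt (hA.1.eigenvalues i) : ℝ) : 𝕜)) *
    (star hA.1.eigenvectorUnitary : Matrix n n 𝕜)

end OldSqrt

/-! Since `B` is invertible, every LQR gain is dead-beat, `B Kᵢ = -A`, and the Riccati equation
collapses to `Qᵢ = Pᵢ`; hence `F = N · Σⱼ Pⱼ ≻ 0`. The data give `X₊ᵢ Gᵢ = B Kᵢ = -A` and `Wᵢ = A`,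
so `R = Aᵀ F A`, and the closed loop is `(I - L̄) ⊗ A`, whose eigenvalues are products `(1 - η) β`
with `η ∈ σ(L̄)`, `β ∈ σ(A)`. With `S = F^{1/2}`, `F^{-1/2} R F^{-1/2} = (S A S⁻¹)ᵀ (S A S⁻¹)` has
norm `‖S A S⁻¹‖² ≥ |β|²`, and the consensus-region condition gives `|(1 - η) β| < 1`. -/

open scoped Pointwise

namespace Matrix

section Sqrt

open scoped ComplexOrder

variable {n 𝕜 : Type*} [Fintype n] [DecidableEq n] [RCLike 𝕜] {A : Matrix n n 𝕜}

lemma PosSemidef.posSemidef_sqrt (hA : A.PosSemidef) : hA.sqrt.PosSemidef := by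
  unfold Matrix.PosSemidef.sqrt
  apply Matrix.PosSemidef.mul_mul_conjTranspose_same
  rw [posSemidef_diagonal_iff]
  intro i
  exact_mod_cast Real.sqrt_nonneg _

lemma PosSemidef.sqrt_mul_self (hA : A.PosSemidef) : hA.sqrt * hA.sqrt = A := by
  unfold Matrix.PosSemidef.sqrt
  conv_rhs => rw [hA.1.spectral_theorem, Unitary.conjStarAlgAut_apply]
  have hu : (star hA.1.eigenvectorUnitary : Matrix n n 𝕜) * hA.1.eigenvectorUnitary = 1 :=
    Unitary.coe_star_mul_self _
  simp only [Matrix.mul_assoc]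
  rw [← Matrix.mul_assoc (star _ : Matrix n n 𝕜), hu, Matrix.one_mul,
    ← Matrix.mul_assoc (diagonal _), diagonal_mul_diagonal]
  congr 3
  funext i
  rw [Function.comp_apply, ← RCLike.ofReal_mul, Real.mul_self_sqrt (hA.eigenvalues_nonneg i)]

end Sqrt

section Riccati

variable {n : Type*} [Fintype n] [DecidableEq n] {R : Type*} [CommRing R]

theorem inv_transpose_mul_mul_mul_transpose_mul {B P : Matrix n n R} (hB : IsUnit B)
    (hP : IsUnit P) : (Bᵀ * P * B)⁻¹ * Bᵀ * P = B⁻¹ := by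
  have hBP : IsUnit (Bᵀ * P).det := by
    rw [det_mul, det_transpose]
    exact ((isUnit_iff_isUnit_det B).mp hB).mul ((isUnit_iff_isUnit_det P).mp hP)
  rw [Matrix.mul_inv_rev, Matrix.mul_assoc, Matrix.mul_assoc B⁻¹, nonsing_inv_mul _ hBP,
    Matrix.mul_one]

theorem mul_lqrGain_eq_neg {B P : Matrix n n R} (hB : IsUnit B) (hP : IsUnit P) (A : Matrix n n R) :
    B * -((Bᵀ * P * B)⁻¹ * Bᵀ * P * A) = -A := by
  rw [inv_transpose_mul_mul_mul_transpose_mul hB hP, Matrix.mul_neg,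
    mul_nonsing_inv_cancel_left _ _ ((isUnit_iff_isUnit_det B).mp hB)]

theorem riccati_correction_eq {B P : Matrix n n R} (hB : IsUnit B) (hP : IsUnit P)
    (A : Matrix n n R) : Aᵀ * P * B * (Bᵀ * P * B)⁻¹ * Bᵀ * P * A = Aᵀ * P * A := by
  rw [Matrix.mul_assoc (Aᵀ * P * B), Matrix.mul_assoc (Aᵀ * P * B),
    inv_transpose_mul_mul_mul_transpose_mul hB hP,
    mul_nonsing_inv_cancel_right _ _ ((isUnit_iff_isUnit_det B).mp hB)]

end Riccati

section DataBased

variable {n T R : Type*} [Fintype n] [Fintype T] [Ring R] {A B K : Matrix n n R}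
  {X U : Matrix n T R} {G : Matrix T n R}

theorem add_mul_mul_eq_of_mul_eq_zero (hXG : X * G = 0) (hUG : U * G = K) :
    (A * X + B * U) * G = B * K := by
  rw [Matrix.add_mul, Matrix.mul_assoc, Matrix.mul_assoc, hXG, hUG, Matrix.mul_zero, zero_add]

variable [DecidableEq n]

theorem add_mul_mul_eq_of_mul_eq_one (hXG : X * G = 1) (hUG : U * G = K) :
    (A * X + B * U) * G = A + B * K := by
  rw [Matrix.add_mul, Matrix.mul_assoc, Matrix.mul_assoc, hXG, hUG, Matrix.mul_one]

end DataBased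

section Kronecker

variable {l m n p α : Type*} [Ring α]

theorem kronecker_neg (A : Matrix l m α) (B : Matrix n p α) : A ⊗ₖ (-B) = -(A ⊗ₖ B) := by
  ext
  simp

theorem sub_kronecker (A A' : Matrix l m α) (B : Matrix n p α) :
    (A - A') ⊗ₖ B = A ⊗ₖ B - A' ⊗ₖ B := by
  ext
  simp [sub_mul]

end Kronecker

section Spectrum

variable {m n p : Type*} [Fintype m] [DecidableEq m] [Fintype n] [DecidableEq n]

theorem mem_spectrum_of_mul_eq_smul {R : Type*} [CommRing R] {D : Matrix n n R}
    {Y : Matrix n p R} {α : R} (hY : Y ≠ 0) (h : D * Y = α • Y) : α ∈ spectrum R D := by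
  rw [spectrum.mem_iff, Algebra.algebraMap_eq_smul_one, isUnit_iff_isUnit_det]
  intro hu
  apply hY
  rw [← nonsing_inv_mul_cancel_left _ Y hu, Matrix.sub_mul, smul_mul, Matrix.one_mul, h,
    sub_self, Matrix.mul_zero]

theorem exists_mulVec_eq_smul_of_mem_spectrum {K : Type*} [Field K] {A : Matrix n n K} {μ : K}
    (hμ : μ ∈ spectrum K A) : ∃ v, v ≠ 0 ∧ A *ᵥ v = μ • v := by
  rw [← spectrum_toLin', ← Module.End.hasEigenvalue_iff_mem_spectrum] at hμ
  obtain ⟨v, hv⟩ := hμ.exists_hasEigenvector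
  exact ⟨v, hv.2, by simpa using hv.apply_eq_smul⟩

theorem spectrum_kronecker_subset {K : Type*} [Field K] [IsAlgClosed K]
    (C : Matrix m m K) (D : Matrix n n K) :
    spectrum K (C ⊗ₖ D) ⊆ spectrum K C * spectrum K D := by
  intro μ hμ
  obtain ⟨z, hz, hCDz⟩ := exists_mulVec_eq_smul_of_mem_spectrum hμ
  obtain ⟨X, rfl⟩ := vec_bijective.2 z
  rw [kronecker_mulVec_vec, ← vec_smul, vec_inj] at hCDz
  -- `C ⊗ₖ D` acts on `vec X` as `X ↦ D * X * Cᵀ`; its `μ`-eigenspace is invariant under the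
  -- commuting map `X ↦ D * X`, which therefore has an eigenmatrix `Y` inside it.
  set L := mulLeftLinearMap m K D
  set R := mulRightLinearMap n K Cᵀ
  have hLR : Commute (L * R) L := LinearMap.ext fun Y => by
    simp [L, R, Matrix.mul_assoc]
  have hmaps := Module.End.mapsTo_genEigenspace_of_comm hLR μ 1
  have : Nontrivial (Module.End.eigenspace (L * R) μ) := Submodule.nontrivial_iff_ne_bot.mpr <|
    (Submodule.ne_bot_iff _).mpr ⟨X, by simpa [L, R, Matrix.mul_assoc] using hCDz,
      fun h => hz (by simp [h])⟩
  obtain ⟨α, hα⟩ := Module.End.exists_eigenvalue (L.restrict hmaps)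
  obtain ⟨⟨Y, hYμ⟩, hYα⟩ := hα.exists_hasEigenvector
  have hY0 : Y ≠ 0 := fun h => hYα.2 (Subtype.ext h)
  have hDY : D * Y = α • Y := congrArg Subtype.val hYα.apply_eq_smul
  have hDYC : α • (Y * Cᵀ) = μ • Y := by
    rw [← smul_mul, ← hDY, Matrix.mul_assoc]
    exact Module.End.mem_eigenspace_iff.mp hYμ
  by_cases hα0 : α = 0
  · have hμ0 : μ = 0 := by
      simpa [hα0, hY0] using hDYC.symm
    obtain ⟨-, j, -⟩ : ∃ i j, Y i j ≠ 0 := by simpa [← Matrix.ext_iff] using hY0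
    have : Nonempty m := ⟨j⟩
    obtain ⟨β, hβ⟩ := spectrum.nonempty_of_isAlgClosed_of_finiteDimensional K C
    exact ⟨β, hβ, α, mem_spectrum_of_mul_eq_smul hY0 hDY, by simp [hα0, hμ0]⟩
  · have hCY : C * Yᵀ = (μ / α) • Yᵀ := by
      rw [← transpose_transpose C, ← transpose_mul, ← transpose_smul, div_eq_inv_mul,
        ← smul_smul, ← hDYC, smul_smul, inv_mul_cancel₀ hα0, one_smul]
    exact ⟨μ / α, mem_spectrum_of_mul_eq_smul (by simpa using hY0) hCY, α,
      mem_spectrum_of_mul_eq_smul hY0 hDY, div_mul_cancel₀ μ hα0⟩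

theorem schurStable_kronecker {C : Matrix m m ℂ} {D : Matrix n n ℂ}
    (h : ∀ α ∈ spectrum ℂ C, ∀ β ∈ spectrum ℂ D, ‖α‖ * ‖β‖ < 1) : SchurStable (C ⊗ₖ D) := by
  intro μ hμ
  obtain ⟨α, hα, β, hβ, rfl⟩ := spectrum_kronecker_subset C D hμ
  rw [norm_mul]
  exact h α hα β hβ

end Spectrum

section ComplexNorm

open WithLp

theorem _root_.EuclideanSpace.norm_sq_eq_norm_re_sq_add_norm_im_sq {ι : Type*} [Fintype ι]
    (w : ι → ℂ) : ‖toLp 2 w‖ ^ 2 =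
      ‖toLp 2 (Complex.re ∘ w)‖ ^ 2 + ‖toLp 2 (Complex.im ∘ w)‖ ^ 2 := by
  simp only [EuclideanSpace.norm_sq_eq, ← Finset.sum_add_distrib]
  refine Finset.sum_congr rfl fun i _ => ?_
  rw [Complex.sq_norm, Complex.normSq_apply, Real.norm_eq_abs, Real.norm_eq_abs, sq_abs, sq_abs,
    sq, sq]
  rfl

variable {m n : Type*} [Fintype n]

theorem map_ofReal_mulVec_re (M : Matrix m n ℝ) (v : n → ℂ) :
    Complex.re ∘ (M.map Complex.ofReal *ᵥ v) = M *ᵥ (Complex.re ∘ v) := by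
  ext i
  simp [mulVec, dotProduct, Complex.re_sum]

theorem map_ofReal_mulVec_im (M : Matrix m n ℝ) (v : n → ℂ) :
    Complex.im ∘ (M.map Complex.ofReal *ᵥ v) = M *ᵥ (Complex.im ∘ v) := by
  ext i
  simp [mulVec, dotProduct, Complex.im_sum]

variable [Fintype m] [DecidableEq n]

theorem l2_opNorm_map_ofReal_le (M : Matrix m n ℝ) : ‖M.map Complex.ofReal‖ ≤ ‖M‖ := by
  rw [l2_opNorm_def (M.map _)]
  refine ContinuousLinearMap.opNorm_le_bound _ (norm_nonneg _) fun v => ?_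
  obtain ⟨w, rfl⟩ : ∃ w, v = toLp 2 w := ⟨ofLp v, (toLp_ofLp 2 v).symm⟩
  change ‖toLp 2 (M.map Complex.ofReal *ᵥ w)‖ ≤ ‖M‖ * ‖toLp 2 w‖
  rw [← sq_le_sq₀ (norm_nonneg _) (by positivity), mul_pow,
    EuclideanSpace.norm_sq_eq_norm_re_sq_add_norm_im_sq,
    EuclideanSpace.norm_sq_eq_norm_re_sq_add_norm_im_sq, map_ofReal_mulVec_re,
    map_ofReal_mulVec_im, mul_add, ← mul_pow, ← mul_pow]
  have hre := l2_opNorm_mulVec M (toLp 2 (Complex.re ∘ w))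
  have him := l2_opNorm_mulVec M (toLp 2 (Complex.im ∘ w))
  simp only [EuclideanSpace.equiv, PiLp.continuousLinearEquiv_symm_apply] at hre him
  gcongr

end ComplexNorm

section Eigenvalue

variable {n : Type*} [Fintype n] [DecidableEq n]

theorem spectrum_map_ofReal_conj {A S : Matrix n n ℝ} (hS : IsUnit S) :
    spectrum ℂ ((S * A * S⁻¹).map Complex.ofReal) = spectrum ℂ (A.map Complex.ofReal) := by
  obtain ⟨u, rfl⟩ := hS
  let φ : Matrix n n ℝ →* Matrix n n ℂ := Complex.ofRealHom.mapMatrix.toMonoidHom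
  change spectrum ℂ (φ (u * A * (u : Matrix n n ℝ)⁻¹)) = _
  rw [← coe_units_inv, map_mul, map_mul, ← Units.coe_map φ, ← Units.coe_map_inv φ,
    spectrum.units_conjugate]
  rfl

theorem norm_le_l2_opNorm_of_mem_spectrum_map_ofReal {M : Matrix n n ℝ} {β : ℂ}
    (hβ : β ∈ spectrum ℂ (M.map Complex.ofReal)) : ‖β‖ ≤ ‖M‖ := by
  cases isEmpty_or_nonempty n
  · simp [spectrum.of_subsingleton] at hβ
  exact (spectrum.norm_le_norm_of_mem hβ).trans (l2_opNorm_map_ofReal_le M)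

theorem sq_norm_le_l2_opNorm_of_mem_spectrum {A S F : Matrix n n ℝ} (hSF : S * S = F)
    (hF : IsUnit F) (hS : S.IsHermitian) {β : ℂ} (hβ : β ∈ spectrum ℂ (A.map Complex.ofReal)) :
    ‖β‖ ^ 2 ≤ ‖S⁻¹ * (Aᵀ * F * A) * S⁻¹‖ := by
  have hSu : IsUnit S := by
    rw [isUnit_iff_isUnit_det, ← hSF, det_mul, IsUnit.mul_iff] at hF
    exact (isUnit_iff_isUnit_det S).mpr hF.1
  have hgram : S⁻¹ * (Aᵀ * F * A) * S⁻¹ = (S * A * S⁻¹)ᴴ * (S * A * S⁻¹) := by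
    rw [conjTranspose_mul, conjTranspose_mul, conjTranspose_nonsing_inv, hS.eq,
      conjTranspose_eq_transpose_of_trivial, ← hSF]
    simp only [Matrix.mul_assoc]
  rw [hgram, l2_opNorm_conjTranspose_mul_self, ← sq]
  gcongr
  rw [← spectrum_map_ofReal_conj hSu] at hβ
  exact norm_le_l2_opNorm_of_mem_spectrum_map_ofReal hβ

end Eigenvalue

theorem schurStableR_one_sub_kronecker {N n : Type*} [Fintype N] [DecidableEq N] [Fintype n]
    [DecidableEq n] {L : Matrix N N ℝ} {A S F : Matrix n n ℝ} (hSF : S * S = F)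
    (hF : IsUnit F) (hS : S.IsHermitian)
    (h : ∀ η ∈ spectrum ℂ (L.map Complex.ofReal),
      Complex.normSq (η - 1) * ‖S⁻¹ * (Aᵀ * F * A) * S⁻¹‖ < 1) :
    SchurStableR ((1 - L) ⊗ₖ A) := by
  have hmap : ((1 - L) ⊗ₖ A).map Complex.ofReal =
      (algebraMap ℂ _ 1 - L.map Complex.ofReal) ⊗ₖ A.map Complex.ofReal := by
    ext ⟨i, j⟩ ⟨k, l⟩
    simp [one_apply, apply_ite Complex.ofReal]
  rw [SchurStableR, hmap]
  refine schurStable_kronecker fun α hα β hβ => ?_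
  rw [← spectrum.singleton_sub_eq] at hα
  obtain ⟨_, rfl, η, hη, rfl⟩ := hα
  have hnormSq : Complex.normSq (η - 1) = ‖1 - η‖ ^ 2 := by
    rw [← Complex.sq_norm, ← norm_neg, neg_sub]
  rw [← pow_lt_one_iff_of_nonneg (by positivity) two_ne_zero, mul_pow]
  calc ‖1 - η‖ ^ 2 * ‖β‖ ^ 2
      ≤ Complex.normSq (η - 1) * ‖S⁻¹ * (Aᵀ * F * A) * S⁻¹‖ := by
        rw [hnormSq]
        gcongr
        exact sq_norm_le_l2_opNorm_of_mem_spectrum hSF hF hS hβ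
    _ < 1 := h η hη

end Matrix

/-- Here `σ_max` is the largest singular value, realized as the L2 operator norm `‖·‖`. -/
theorem data_driven_consensus_region_general {n T N : ℕ} (hN : 1 ≤ N)
    (A B : Matrix (Fin n) (Fin n) ℝ) (hB : IsUnit B)
    (Q P : Fin N → Matrix (Fin n) (Fin n) ℝ)
    (hP : ∀ i, (P i).PosDef)
    (hric : ∀ i, P i =
      Aᵀ * P i * A - Aᵀ * P i * B * (Bᵀ * P i * B)⁻¹ * Bᵀ * P i * A + Q i)
    (K : Fin N → Matrix (Fin n) (Fin n) ℝ)
    (hK : ∀ i, K i = -((Bᵀ * P i * B)⁻¹ * Bᵀ * P i * A))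
    (Xminus Uminus Xplus : Fin N → Matrix (Fin n) (Fin T) ℝ)
    (hXplus : ∀ i, Xplus i = A * Xminus i + B * Uminus i)
    (G 𝒰 : Fin N → Matrix (Fin T) (Fin n) ℝ)
    (hG1 : ∀ i, Uminus i * G i = K i) (hG2 : ∀ i, Xminus i * G i = 0)
    (h𝒰1 : ∀ i, Xminus i * 𝒰 i = 1) (h𝒰2 : ∀ i, Uminus i * 𝒰 i = K i)
    (K₀ Psum : Matrix (Fin n) (Fin n) ℝ)
    (hK₀ : K₀ = (1 / (N : ℝ)) • ∑ i, K i) (hPsum : Psum = ∑ i, P i)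
    (W : Fin N → Matrix (Fin n) (Fin n) ℝ)
    (hW : ∀ i, W i = Xplus i * 𝒰 i - Xplus i * G i)
    (R F : Matrix (Fin n) (Fin n) ℝ)
    (hR : R = ∑ i, ((G i)ᵀ * (Xplus i)ᵀ * P i * Xplus i * G i + (W i)ᵀ * (Psum - P i) * W i))
    (hF : F = ∑ i, (Q i + (Psum - P i))) :
    F.PosDef ∧
      ∀ (hFsd : F.PosSemidef) (Lbar : Matrix (Fin N) (Fin N) ℝ),
        (∀ η ∈ spectrum ℂ (Lbar.map Complex.ofReal),
            Complex.normSq (η - 1) * ‖hFsd.sqrt⁻¹ * R * hFsd.sqrt⁻¹‖ < 1) →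
        SchurStableR ((1 : Matrix (Fin N) (Fin N) ℝ) ⊗ₖ A + Lbar ⊗ₖ (B * K₀)) := by
  have : Nonempty (Fin N) := ⟨⟨0, hN⟩⟩
  have hBK : ∀ i, B * K i = -A := fun i => by rw [hK, mul_lqrGain_eq_neg hB (hP i).isUnit]
  have hQP : ∀ i, Q i = P i := fun i => by
    simpa [riccati_correction_eq hB (hP i).isUnit] using (hric i).symm
  have hXG : ∀ i, Xplus i * G i = B * K i := fun i => by
    rw [hXplus, add_mul_mul_eq_of_mul_eq_zero (hG2 i) (hG1 i)]
  have hWA : ∀ i, W i = A := fun i => by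
    rw [hW, hXG, hXplus, add_mul_mul_eq_of_mul_eq_one (h𝒰1 i) (h𝒰2 i), add_sub_cancel_right]
  have hRF : R = Aᵀ * F * A := by
    rw [hR, hF, Matrix.mul_sum, Matrix.sum_mul]
    refine Finset.sum_congr rfl fun i _ => ?_
    rw [← transpose_mul, Matrix.mul_assoc _ (Xplus i), hXG, hBK, hWA, hQP]
    simp only [transpose_neg, Matrix.neg_mul, Matrix.mul_neg, neg_neg, Matrix.mul_add,
      Matrix.add_mul]
  have hFpd : F.PosDef := by
    rw [hF]
    refine posDef_sum Finset.univ_nonempty fun i _ => ?_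
    rw [hQP, add_sub_cancel, hPsum]
    exact posDef_sum Finset.univ_nonempty fun i _ => hP i
  have hBK₀ : B * K₀ = -A := by
    simp [hK₀, Matrix.mul_sum, hBK, ← Nat.cast_smul_eq_nsmul ℝ, smul_smul,
      show (N : ℝ) ≠ 0 by positivity]
  refine ⟨hFpd, fun hFsd Lbar hL => ?_⟩
  rw [hBK₀, kronecker_neg, ← sub_eq_add_neg, ← sub_kronecker]
  rw [hRF] at hL
  exact schurStableR_one_sub_kronecker hFsd.sqrt_mul_self hFpd.isUnit
    hFsd.posSemidef_sqrt.isHermitian hL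

/-- Lemma 2 of the paper: the data-based consensus region
`|η-1|² < 1/σ_max(F^{-1/2} R F^{-1/2})` guarantees that the averaged data-based gain `K₀`
renders `I_N ⊗ A + L̄ ⊗ B K₀` Schur stable.  Here `σ_max` is the largest singular value,
realized as the L2 operator norm `‖·‖`, and `F^{-1/2}` is the inverse of the positive
semidefinite square root of `F`. -/
theorem data_driven_consensus_region {n T N : ℕ} (hN : 1 ≤ N)
    (A B : Matrix (Fin n) (Fin n) ℝ) (hB : IsUnit B)
    (Q P : Fin N → Matrix (Fin n) (Fin n) ℝ)
    (hQ : ∀ i, (Q i).PosDef) (hP : ∀ i, (P i).PosDef)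
    (hric : ∀ i, P i =
      Aᵀ * P i * A - Aᵀ * P i * B * (Bᵀ * P i * B)⁻¹ * Bᵀ * P i * A + Q i)
    (K : Fin N → Matrix (Fin n) (Fin n) ℝ)
    (hK : ∀ i, K i = -((Bᵀ * P i * B)⁻¹ * Bᵀ * P i * A))
    (Xminus Uminus Xplus : Fin N → Matrix (Fin n) (Fin T) ℝ)
    (hXplus : ∀ i, Xplus i = A * Xminus i + B * Uminus i)
    (G 𝒰 : Fin N → Matrix (Fin T) (Fin n) ℝ)
    (hG1 : ∀ i, Uminus i * G i = K i) (hG2 : ∀ i, Xminus i * G i = 0)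
    (h𝒰1 : ∀ i, Xminus i * 𝒰 i = 1) (h𝒰2 : ∀ i, Uminus i * 𝒰 i = K i)
    (K₀ Psum : Matrix (Fin n) (Fin n) ℝ)
    (hK₀ : K₀ = (1 / (N : ℝ)) • ∑ i, K i) (hPsum : Psum = ∑ i, P i)
    (W : Fin N → Matrix (Fin n) (Fin n) ℝ)
    (hW : ∀ i, W i = Xplus i * 𝒰 i - Xplus i * G i)
    (R F : Matrix (Fin n) (Fin n) ℝ)
    (hR : R = ∑ i, ((G i)ᵀ * (Xplus i)ᵀ * P i * Xplus i * G i + (W i)ᵀ * (Psum - P i) * W i))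
    (hF : F = ∑ i, (Q i + (Psum - P i))) :
    F.PosDef ∧
      ∀ (hFsd : F.PosSemidef) (Lbar : Matrix (Fin N) (Fin N) ℝ),
        (∀ η ∈ spectrum ℂ (Lbar.map Complex.ofReal),
            Complex.normSq (η - 1) * ‖hFsd.sqrt⁻¹ * R * hFsd.sqrt⁻¹‖ < 1) →
        SchurStableR ((1 : Matrix (Fin N) (Fin N) ℝ) ⊗ₖ A + Lbar ⊗ₖ (B * K₀)) :=
  data_driven_consensus_region_general hN A B hB Q P hP hric K hK Xminus Uminus Xplus hXplus G 𝒰 hG1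
    hG2 h𝒰1 h𝒰2 K₀ Psum hK₀ hPsum W hW R F hR hF
end
end

section
/- Let A ∈ ℝ^{n×n}, B ∈ ℝ^{n×p}, Q ∈ ℝ^{n×n}, and let P ∈ ℝ^{n×n} be symmetric such that Bᵀ P B is invertible and P = Aᵀ P A - Aᵀ P B (Bᵀ P B)⁻¹ Bᵀ P A + Q. Set K = -(Bᵀ P B)⁻¹ Bᵀ P A. Then for every complex number η, regarding all matrices as complex matrices, Aᵀ P A + η·Aᵀ P B K + η̄·Kᵀ Bᵀ P A + |η|²·Kᵀ Bᵀ P B K - P = |η - 1|²·Kᵀ Bᵀ P B K - Q. -/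
open Matrix

noncomputable section

/-- Map a real matrix to a complex one, entrywise. -/
def matC {a b : Type*} (M : Matrix a b ℝ) : Matrix a b ℂ := M.map Complex.ofReal

lemma matC_add {a b : Type*} (M N : Matrix a b ℝ) : matC (M + N) = matC M + matC N := by
  simp [matC, Matrix.map_add]

lemma matC_sub {a b : Type*} (M N : Matrix a b ℝ) : matC (M - N) = matC M - matC N := by
  simp [matC, Matrix.map_sub]

lemma matC_neg {a b : Type*} (M : Matrix a b ℝ) : matC (-M) = -matC M := by
  ext i j; simp [matC]

/-- for the Riccati gain `K = -(BᵀPB)⁻¹BᵀPA`, the Lyapunov increment of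
`A + ηBK` with respect to `P` equals `|η-1|²·KᵀBᵀPBK - Q`. -/
theorem riccati_consensus_region_identity {n p : ℕ}
    (A : Matrix (Fin n) (Fin n) ℝ) (B : Matrix (Fin n) (Fin p) ℝ)
    (Q P : Matrix (Fin n) (Fin n) ℝ) (hPsymm : P.IsSymm)
    (hBPB : IsUnit (Bᵀ * P * B))
    (hric : P = Aᵀ * P * A - Aᵀ * P * B * (Bᵀ * P * B)⁻¹ * Bᵀ * P * A + Q)
    (K : Matrix (Fin p) (Fin n) ℝ) (hK : K = -((Bᵀ * P * B)⁻¹ * Bᵀ * P * A)) :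
    ∀ η : ℂ,
      matC (Aᵀ * P * A) + η • matC (Aᵀ * P * B * K)
          + (starRingEnd ℂ η) • matC (Kᵀ * Bᵀ * P * A)
          + (Complex.normSq η : ℂ) • matC (Kᵀ * Bᵀ * P * B * K)
          - matC P
        = (Complex.normSq (η - 1) : ℂ) • matC (Kᵀ * Bᵀ * P * B * K) - matC Q := by
  intro η
  set M := Aᵀ * P * B * (Bᵀ * P * B)⁻¹ * Bᵀ * P * A with hM
  have hBPBsymm : (Bᵀ * P * B)ᵀ = Bᵀ * P * B := by
    rw [Matrix.transpose_mul, Matrix.transpose_mul, Matrix.transpose_transpose,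
      hPsymm.eq, Matrix.mul_assoc]
  have hinvsymm : ((Bᵀ * P * B)⁻¹)ᵀ = (Bᵀ * P * B)⁻¹ := by
    rw [Matrix.transpose_nonsing_inv, hBPBsymm]
  have hdet : IsUnit (Bᵀ * P * B).det := (Matrix.isUnit_iff_isUnit_det _).mp hBPB
  have hKT : Kᵀ = -(Aᵀ * P * B * (Bᵀ * P * B)⁻¹) := by
    rw [hK, Matrix.transpose_neg, Matrix.transpose_mul, Matrix.transpose_mul,
      Matrix.transpose_mul, hinvsymm, Matrix.transpose_transpose, hPsymm.eq]
    simp [Matrix.mul_assoc]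
  have h1 : Aᵀ * P * B * K = -M := by
    rw [hK, hM]; simp [Matrix.mul_assoc]
  have h2 : Kᵀ * Bᵀ * P * A = -M := by
    rw [hKT, hM]; simp [Matrix.mul_assoc]
  have h3 : Kᵀ * Bᵀ * P * B * K = M := by
    rw [hKT, hK, hM]
    have : Aᵀ * P * B * (Bᵀ * P * B)⁻¹ * (Bᵀ * P * B) = Aᵀ * P * B := by
      rw [Matrix.mul_assoc (Aᵀ * P * B), Matrix.nonsing_inv_mul _ hdet, Matrix.mul_one]
    calc -(Aᵀ * P * B * (Bᵀ * P * B)⁻¹) * Bᵀ * P * B * -((Bᵀ * P * B)⁻¹ * Bᵀ * P * A)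
        = (Aᵀ * P * B * (Bᵀ * P * B)⁻¹ * (Bᵀ * P * B)) * ((Bᵀ * P * B)⁻¹ * (Bᵀ * (P * A))) := by
          simp [Matrix.mul_assoc]
      _ = Aᵀ * P * B * (Bᵀ * P * B)⁻¹ * Bᵀ * P * A := by rw [this]; simp [Matrix.mul_assoc]
  have hP : matC P = matC (Aᵀ * P * A) - matC M + matC Q := by
    have := congrArg matC hric
    rwa [matC_add, matC_sub] at this
  have hns : (Complex.normSq (η - 1) : ℂ)
      = (Complex.normSq η : ℂ) - η - (starRingEnd ℂ η) + 1 := by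
    rw [← Complex.mul_conj, ← Complex.mul_conj]
    simp [map_sub]
    ring
  rw [h1, h2, h3, hP, matC_neg, hns]
  module

end
end

section
/- Let A ∈ ℝ^{n×n}, B ∈ ℝ^{n×p}, and let L ∈ ℝ^{N×N} be symmetric with all eigenvalues contained in the interval [λ₁, λ_N], where 0 < λ₁ ≤ λ_N. Set α = 2/(λ₁ + λ_N) and ν = (λ_N - λ₁)/(λ_N + λ₁). Suppose Φ ∈ ℝ^{n×n} is symmetric positive definite and F ∈ ℝ^{p×n} is such that for every real Δ with |Δ| ≤ ν, the matrix Φ - (AΦ + (1+Δ)·B F)·Φ⁻¹·(AΦ + (1+Δ)·B F)ᵀ is positive definite. Then the matrix I_N ⊗ A + α·L ⊗ (B·F·Φ⁻¹) is Schur stable. -/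
/-!
Diagonalising the symmetric matrix `L = U D Uᵀ` turns `I ⊗ A + αL ⊗ BFΦ⁻¹` into a block-diagonal
matrix with blocks `A + α λᵢ BFΦ⁻¹`, so its eigenvalues are those of these blocks. Each block equals
`A + (1 + Δ) BFΦ⁻¹` with `Δ = α λᵢ - 1 ∈ [-ν, ν]`, and the robust hypothesis is then exactly the
Stein inequality `Φ - K Φ Kᵀ > 0` for `K` this block: for a left eigenvector `u` of `K` with
eigenvalue `μ`, the form of `Φ - K Φ Kᵀ` at `ū` equals `(1 - |μ|²) ū*Φū`, so `|μ| < 1`.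
-/

open Matrix
open scoped Kronecker

noncomputable section

theorem abs_two_div_add_mul_sub_one_le {a b x : ℝ} (hab : 0 < a + b) (hax : a ≤ x)
    (hxb : x ≤ b) : |2 / (a + b) * x - 1| ≤ (b - a) / (b + a) := by
  have hx : 2 / (a + b) * x - 1 = (2 * x - (a + b)) / (a + b) := by field_simp
  rw [hx, abs_div, abs_of_pos hab, add_comm b a, div_le_div_iff_of_pos_right hab, abs_le]
  constructor <;> linarith

namespace Matrix

theorem exists_vecMul_eq_smul_of_mem_spectrum {m K : Type*} [Fintype m] [DecidableEq m] [Field K]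
    {M : Matrix m m K} {μ : K} (hμ : μ ∈ spectrum K M) : ∃ u ≠ 0, u ᵥ* M = μ • u := by
  rw [mem_spectrum_iff_isRoot_charpoly, Polynomial.IsRoot, eval_charpoly,
    ← exists_vecMul_eq_zero_iff] at hμ
  obtain ⟨u, hu0, hu⟩ := hμ
  refine ⟨u, hu0, ?_⟩
  rw [vecMul_sub, sub_eq_zero, scalar_apply] at hu
  rw [← hu]
  ext i
  simp [vecMul_diagonal, mul_comm]

section Stein

open scoped ComplexOrder

theorem norm_lt_one_of_posDef_sub_mul_mul_conjTranspose {m 𝕜 : Type*} [Fintype m]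
    [DecidableEq m] [RCLike 𝕜] {K Φ : Matrix m m 𝕜} (hΦ : Φ.PosDef)
    (h : (Φ - K * Φ * Kᴴ).PosDef) {μ : 𝕜} (hμ : μ ∈ spectrum 𝕜 K) : ‖μ‖ < 1 := by
  obtain ⟨u, hu0, hu⟩ := exists_vecMul_eq_smul_of_mem_spectrum hμ
  have hv0 : star u ≠ 0 := by simpa using hu0
  have hKΦK : star (star u) ⬝ᵥ ((K * Φ * Kᴴ) *ᵥ star u)
      = (‖μ‖ ^ 2 : ℝ) • (star (star u) ⬝ᵥ (Φ *ᵥ star u)) := by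
    rw [star_star, ← mulVec_mulVec, ← mulVec_mulVec, ← star_vecMul, hu, star_smul, mulVec_smul,
      mulVec_smul, dotProduct_smul, dotProduct_mulVec, hu, smul_dotProduct, smul_smul,
      RCLike.real_smul_eq_coe_mul, smul_eq_mul, RCLike.ofReal_pow, ← RCLike.conj_mul]
    rfl
  have hq := RCLike.pos_iff.mp (hΦ.dotProduct_mulVec_pos hv0)
  have hQ := RCLike.pos_iff.mp (h.dotProduct_mulVec_pos hv0)
  rw [sub_mulVec, dotProduct_sub, hKΦK, map_sub, RCLike.smul_re] at hQ
  have : ‖μ‖ ^ 2 < 1 := by nlinarith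
  exact (sq_lt_one_iff₀ (norm_nonneg μ)).mp this

theorem re_star_dotProduct_map_ofReal_mulVec {m : Type*} [Fintype m] (M : Matrix m m ℝ)
    (v : m → ℂ) :
    (star v ⬝ᵥ (M.map (↑) *ᵥ v)).re
      = (fun i ↦ (v i).re) ⬝ᵥ (M *ᵥ fun i ↦ (v i).re)
        + (fun i ↦ (v i).im) ⬝ᵥ (M *ᵥ fun i ↦ (v i).im) := by
  simp only [dotProduct, mulVec, map_apply, Pi.star_apply, Finset.mul_sum, Complex.re_sum,
    ← Finset.sum_add_distrib, Complex.mul_re, Complex.star_def, Complex.conj_re, Complex.conj_im,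
    Complex.ofReal_re, Complex.ofReal_im, Complex.im_ofReal_mul]
  refine Finset.sum_congr rfl fun i _ ↦ Finset.sum_congr rfl fun j _ ↦ ?_
  ring

theorem PosDef.map_ofReal_s9 {m : Type*} [Fintype m] {M : Matrix m m ℝ} (hM : M.PosDef) :
    (M.map ((↑) : ℝ → ℂ)).PosDef := by
  have hH : (M.map ((↑) : ℝ → ℂ)).IsHermitian :=
    hM.isHermitian.map _ fun r ↦ (Complex.conj_ofReal r).symm
  refine .of_dotProduct_mulVec_pos hH fun v hv ↦ RCLike.pos_iff.mpr
    ⟨?_, hH.im_star_dotProduct_mulVec_self v⟩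
  have hquad (x : m → ℝ) : 0 ≤ x ⬝ᵥ (M *ᵥ x) := by
    simpa using hM.posSemidef.dotProduct_mulVec_nonneg x
  have hquad_pos {x : m → ℝ} (hx : x ≠ 0) : 0 < x ⬝ᵥ (M *ᵥ x) := by
    simpa using hM.dotProduct_mulVec_pos hx
  change 0 < (star v ⬝ᵥ (M.map (↑) *ᵥ v)).re
  rw [re_star_dotProduct_map_ofReal_mulVec]
  by_cases hre : (fun i ↦ (v i).re) = 0
  · have him : (fun i ↦ (v i).im) ≠ 0 := fun him ↦
      hv (funext fun i ↦ Complex.ext (congrFun hre i) (congrFun him i))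
    exact add_pos_of_nonneg_of_pos (hquad _) (hquad_pos him)
  · exact add_pos_of_pos_of_nonneg (hquad_pos hre) (hquad _)

end Stein

theorem map_kronecker {R S l m n p : Type*} [Mul R] [Mul S] {f : R → S}
    (hf : ∀ a b, f (a * b) = f a * f b) (A : Matrix l m R) (B : Matrix n p R) :
    (A ⊗ₖ B).map f = A.map f ⊗ₖ B.map f := by
  ext
  simp [hf]

theorem one_kronecker_add_diagonal_kronecker {R ι m n : Type*} [Semiring R] [DecidableEq ι]
    (d : ι → R) (A G : Matrix m n R) :
    (1 : Matrix ι ι R) ⊗ₖ A + diagonal d ⊗ₖ G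
      = reindex (.prodComm _ _) (.prodComm _ _) (blockDiagonal fun i ↦ A + d i • G) := by
  rw [one_kronecker, diagonal_kronecker]
  change _ = reindex _ _ (blockDiagonal ((fun _ ↦ A) + fun i ↦ d i • G))
  rw [blockDiagonal_add]
  rfl

section CommRing

variable {R ι m : Type*} [CommRing R] [Fintype ι] [DecidableEq ι] [Fintype m] [DecidableEq m]

theorem spectrum_blockDiagonal (M : ι → Matrix m m R) :
    spectrum R (blockDiagonal M) = ⋃ i, spectrum R (M i) := by
  ext μ
  have hsub : algebraMap R (Matrix (m × ι) (m × ι) R) μ - blockDiagonal M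
      = blockDiagonal fun i ↦ algebraMap R (Matrix m m R) μ - M i := by
    simp only [Algebra.algebraMap_eq_smul_one, ← blockDiagonal_one, ← blockDiagonal_smul,
      ← blockDiagonal_sub]
    rfl
  simp only [Set.mem_iUnion, spectrum.mem_iff, hsub, isUnit_iff_isUnit_det, det_blockDiagonal,
    IsUnit.prod_univ_iff, not_forall]

theorem spectrum_one_kronecker_add_kronecker (P : (Matrix ι ι R)ˣ) (d : ι → R)
    (A G : Matrix m m R) :
    spectrum R ((1 : Matrix ι ι R) ⊗ₖ A + (P * diagonal d * P⁻¹ : Matrix ι ι R) ⊗ₖ G)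
      = ⋃ i, spectrum R (A + d i • G) := by
  let Q : (Matrix (ι × m) (ι × m) R)ˣ :=
    ⟨↑P ⊗ₖ 1, ↑P⁻¹ ⊗ₖ 1, by simp [← mul_kronecker_mul], by simp [← mul_kronecker_mul]⟩
  have hconj : (1 : Matrix ι ι R) ⊗ₖ A + (P * diagonal d * P⁻¹ : Matrix ι ι R) ⊗ₖ G
      = (Q * ((1 : Matrix ι ι R) ⊗ₖ A + diagonal d ⊗ₖ G) * Q⁻¹ : Matrix (ι × m) (ι × m) R) := by
    simp only [Q, Units.inv_mk]
    rw [mul_add, add_mul, ← mul_kronecker_mul, ← mul_kronecker_mul, ← mul_kronecker_mul,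
      ← mul_kronecker_mul]
    simp
  rw [hconj, spectrum.units_conjugate, one_kronecker_add_diagonal_kronecker,
    ← coe_reindexAlgEquiv R R, AlgEquiv.spectrum_eq, spectrum_blockDiagonal]

end CommRing

end Matrix

theorem schurStableR_of_posDef_sub_mul_mul_transpose {m : Type*} [Fintype m] [DecidableEq m]
    {K Φ : Matrix m m ℝ} (hΦ : Φ.PosDef) (h : (Φ - K * Φ * Kᵀ).PosDef) : SchurStableR K := by
  have hmap : (Φ - K * Φ * Kᵀ).map Complex.ofReal
      = Φ.map Complex.ofReal - K.map Complex.ofReal * Φ.map Complex.ofReal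
        * (K.map Complex.ofReal)ᴴ := by
    change Complex.ofRealHom.mapMatrix _ = _
    rw [map_sub, map_mul, map_mul, ← conjTranspose_map _ fun r ↦ (Complex.conj_ofReal r).symm,
      conjTranspose_eq_transpose_of_trivial]
    rfl
  exact fun μ ↦
    norm_lt_one_of_posDef_sub_mul_mul_conjTranspose hΦ.map_ofReal_s9 (hmap ▸ h.map_ofReal_s9)

theorem SchurStableR.one_kronecker_add_kronecker {ι m : Type*} [Fintype ι] [DecidableEq ι]
    [Fintype m] [DecidableEq m] {L : Matrix ι ι ℝ} (hL : L.IsHermitian) {A G : Matrix m m ℝ}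
    (h : ∀ i, SchurStableR (A + hL.eigenvalues i • G)) :
    SchurStableR ((1 : Matrix ι ι ℝ) ⊗ₖ A + L ⊗ₖ G) := by
  let U : (Matrix ι ι ℂ)ˣ :=
    Units.map Complex.ofRealHom.mapMatrix.toMonoidHom (Unitary.toUnits hL.eigenvectorUnitary)
  have hLc : L.map Complex.ofReal
      = (U * diagonal (fun i ↦ (hL.eigenvalues i : ℂ)) * U⁻¹ : Matrix ι ι ℂ) := by
    change Complex.ofRealHom.mapMatrix L = _
    conv_lhs => rw [hL.spectral_theorem]
    simp [U, map_mul]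
  intro μ hμ
  rw [Matrix.map_add _ Complex.ofReal_add, map_kronecker Complex.ofReal_mul,
    map_kronecker Complex.ofReal_mul, hLc, Matrix.map_one _ Complex.ofReal_zero Complex.ofReal_one,
    spectrum_one_kronecker_add_kronecker] at hμ
  obtain ⟨i, hi⟩ := Set.mem_iUnion.mp hμ
  exact h i μ (by simpa [Matrix.map_add, Matrix.map_smul] using hi)

theorem robust_certificate_kronecker_schur_general {n p N : ℕ}
    (A : Matrix (Fin n) (Fin n) ℝ) (B : Matrix (Fin n) (Fin p) ℝ)
    (L : Matrix (Fin N) (Fin N) ℝ) (hLsymm : L.IsSymm)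
    (lam1 lamN : ℝ) (hlam1 : 0 < lam1)
    (hspec : ∀ μ ∈ spectrum ℝ L, lam1 ≤ μ ∧ μ ≤ lamN)
    (α ν : ℝ) (hα : α = 2 / (lam1 + lamN)) (hν : ν = (lamN - lam1) / (lamN + lam1))
    (Φ : Matrix (Fin n) (Fin n) ℝ) (hΦ : Φ.PosDef)
    (F : Matrix (Fin p) (Fin n) ℝ)
    (hrob : ∀ Δ : ℝ, |Δ| ≤ ν →
      (Φ - (A * Φ + (1 + Δ) • (B * F)) * Φ⁻¹ * (A * Φ + (1 + Δ) • (B * F))ᵀ).PosDef) :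
    SchurStableR ((1 : Matrix (Fin N) (Fin N) ℝ) ⊗ₖ A + (α • L) ⊗ₖ (B * F * Φ⁻¹)) := by
  have hL : L.IsHermitian := by
    rwa [IsHermitian, conjTranspose_eq_transpose_of_trivial]
  have hΦdet : IsUnit Φ.det := (isUnit_iff_isUnit_det Φ).mp hΦ.isUnit
  have hΦsymm : Φᵀ = Φ := by
    simpa [IsHermitian, conjTranspose_eq_transpose_of_trivial] using hΦ.isHermitian
  rw [smul_kronecker, ← kronecker_smul]
  refine SchurStableR.one_kronecker_add_kronecker hL fun i ↦ ?_
  set K := A + hL.eigenvalues i • α • (B * F * Φ⁻¹)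
  have hdi := hspec _ (hL.eigenvalues_mem_spectrum_real i)
  have hΔ : |α * hL.eigenvalues i - 1| ≤ ν := by
    rw [hα, hν]
    exact abs_two_div_add_mul_sub_one_le (by linarith) hdi.1 hdi.2
  have hKΦ : A * Φ + (1 + (α * hL.eigenvalues i - 1)) • (B * F) = K * Φ := by
    rw [add_sub_cancel, add_mul, smul_mul_assoc, smul_mul_assoc, Matrix.mul_assoc (B * F),
      nonsing_inv_mul Φ hΦdet, Matrix.mul_one, smul_smul, mul_comm]
  refine schurStableR_of_posDef_sub_mul_mul_transpose hΦ ?_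
  have hrob' := hrob _ hΔ
  rwa [hKΦ, transpose_mul, hΦsymm, Matrix.mul_assoc K Φ Φ⁻¹, mul_nonsing_inv Φ hΦdet,
    Matrix.mul_one, ← Matrix.mul_assoc] at hrob'

/-- robustness step inside the proof of Theorem 4: a quadratic Lyapunov
certificate `Φ` robust over the interval of uncertainties `|Δ| ≤ ν` yields Schur stability
of the Kronecker closed-loop matrix `I_N ⊗ A + αL ⊗ BFΦ⁻¹`. -/
theorem robust_certificate_kronecker_schur {n p N : ℕ}
    (A : Matrix (Fin n) (Fin n) ℝ) (B : Matrix (Fin n) (Fin p) ℝ)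
    (L : Matrix (Fin N) (Fin N) ℝ) (hLsymm : L.IsSymm)
    (lam1 lamN : ℝ) (hlam1 : 0 < lam1) (hlam : lam1 ≤ lamN)
    (hspec : ∀ μ ∈ spectrum ℝ L, lam1 ≤ μ ∧ μ ≤ lamN)
    (α ν : ℝ) (hα : α = 2 / (lam1 + lamN)) (hν : ν = (lamN - lam1) / (lamN + lam1))
    (Φ : Matrix (Fin n) (Fin n) ℝ) (hΦ : Φ.PosDef)
    (F : Matrix (Fin p) (Fin n) ℝ)
    (hrob : ∀ Δ : ℝ, |Δ| ≤ ν →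
      (Φ - (A * Φ + (1 + Δ) • (B * F)) * Φ⁻¹ * (A * Φ + (1 + Δ) • (B * F))ᵀ).PosDef) :
    SchurStableR ((1 : Matrix (Fin N) (Fin N) ℝ) ⊗ₖ A + (α • L) ⊗ₖ (B * F * Φ⁻¹)) :=
  robust_certificate_kronecker_schur_general A B L hLsymm lam1 lamN hlam1 hspec α ν hα hν Φ hΦ F
    hrob
end
end

section
/- Let Λ, R̃ ∈ ℝ^{p×p} be symmetric positive definite matrices and set M = (Λ + R̃)⁻¹Λ. Then for every complex number λ with |λ| ≤ δ for some 0 < δ < 1, every eigenvalue of the complex matrix I_p - (1-λ)·M has modulus strictly less than 1; that is, I_p + (1-λ)·𝒪 is Schur stable, where 𝒪 = -(Λ+R̃)⁻¹Λ. -/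
/-!
An eigenvalue of `1 - (1 - λ) M` has the form `1 - (1 - λ) ν` with `ν` an eigenvalue of `M`.
If `M v = ν v` with `v ≠ 0`, then `Λ v = ν (Λ + R̃) v`, and pairing with `v` gives
`ν = v*Λv / (v*Λv + v*R̃v) ∈ (0, 1)`. For such real `ν = t`,
`|1 - (1 - λ) t| ≤ (1 - t) + |λ| t < 1`.
-/

open Matrix

open scoped ComplexOrder Pointwise

theorem spectrum_one_sub_smul {K A : Type*} [Field K] [Ring A] [Algebra K A] {c : K} (hc : c ≠ 0)
    (a : A) : spectrum K (1 - c • a) = (fun ν => 1 - c * ν) '' spectrum K a := by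
  have hsmul : spectrum K (c • a) = c • spectrum K a := by
    simpa using spectrum.unit_smul_eq_smul a (Units.mk0 c hc)
  rw [← map_one (algebraMap K A), ← spectrum.singleton_sub_eq, hsmul, Set.singleton_sub,
    ← Set.image_smul, Set.image_image]
  rfl

theorem Matrix.exists_mulVec_eq_smul_of_mem_spectrum_s16 {K n : Type*} [Field K] [Fintype n]
    [DecidableEq n] {A : Matrix n n K} {μ : K} (hμ : μ ∈ spectrum K A) :
    ∃ v ≠ 0, A *ᵥ v = μ • v := by
  rw [← spectrum_toLin', ← Module.End.hasEigenvalue_iff_mem_spectrum] at hμ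
  obtain ⟨v, hv, hv0⟩ := hμ.exists_hasEigenvector
  exact ⟨v, hv0, Module.End.mem_eigenspace_iff.mp hv⟩

theorem Matrix.PosDef.map_algebraMap {𝕜 n : Type*} [RCLike 𝕜] [Fintype n] [DecidableEq n]
    {A : Matrix n n ℝ} (hA : A.PosDef) : (A.map (algebraMap ℝ 𝕜)).PosDef := by
  set U : Matrix n n ℝ := (hA.1.eigenvectorUnitary : Matrix n n ℝ)
  have hU : IsUnit (U.map (algebraMap ℝ 𝕜)) :=
    Unitary.isUnit_coe.map (algebraMap ℝ 𝕜).mapMatrix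
  rw [hA.1.spectral_theorem, Unitary.conjStarAlgAut_apply]
  simp only [Matrix.map_mul, star_eq_conjTranspose]
  rw [conjTranspose_map _ (fun a => (RCLike.conj_ofReal a).symm), ← star_eq_conjTranspose,
    hU.posDef_star_right_conjugate_iff, diagonal_map (map_zero _), posDef_diagonal_iff]
  intro i
  simpa using hA.eigenvalues_pos i

theorem Matrix.PosDef.spectrum_subset_Ioo_of_add_mul_eq {𝕜 n : Type*} [RCLike 𝕜] [Fintype n]
    [DecidableEq n] {A B M : Matrix n n 𝕜} (hA : A.PosDef) (hB : B.PosDef)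
    (hM : (A + B) * M = A) : spectrum 𝕜 M ⊆ ((↑) : ℝ → 𝕜) '' Set.Ioo 0 1 := by
  intro ν hν
  obtain ⟨v, hv0, hv⟩ := exists_mulVec_eq_smul_of_mem_spectrum_s16 hν
  obtain ⟨a, ha, hav⟩ := RCLike.pos_iff_exists_ofReal.mp (hA.dotProduct_mulVec_pos hv0)
  obtain ⟨b, hb, hbv⟩ := RCLike.pos_iff_exists_ofReal.mp (hB.dotProduct_mulVec_pos hv0)
  have hab : star v ⬝ᵥ (A *ᵥ v) = ν * (star v ⬝ᵥ (A *ᵥ v) + star v ⬝ᵥ (B *ᵥ v)) := by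
    rw [← dotProduct_add, ← add_mulVec, ← smul_eq_mul, ← dotProduct_smul, ← mulVec_smul, ← hv,
      mulVec_mulVec, hM]
  rw [← hav, ← hbv] at hab
  refine ⟨a / (a + b), ⟨by positivity, (div_lt_one (by positivity)).2 (by linarith)⟩, ?_⟩
  have hab0 : (a : 𝕜) + b ≠ 0 := by exact_mod_cast (add_pos ha hb).ne'
  rw [RCLike.ofReal_div, RCLike.ofReal_add, div_eq_iff hab0]
  exact hab

theorem norm_one_sub_mul_ofReal_lt_one {𝕜 : Type*} [RCLike 𝕜] {t : ℝ} (ht : t ∈ Set.Ioo 0 1)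
    {z : 𝕜} (hz : ‖z‖ < 1) : ‖1 - (1 - z) * t‖ < 1 :=
  calc ‖1 - (1 - z) * t‖ = ‖((1 - t : ℝ) : 𝕜) + z * t‖ := by push_cast; ring_nf
    _ ≤ (1 - t) + ‖z‖ * t := by
      grw [norm_add_le, norm_mul, RCLike.norm_ofReal, RCLike.norm_ofReal, abs_of_pos ht.1,
        abs_of_pos (sub_pos.2 ht.2)]
    _ < 1 := by nlinarith [ht.1]

theorem gain_iteration_schur_stable_general {p : ℕ}
    (Λ Rt : Matrix (Fin p) (Fin p) ℝ) (hΛ : Λ.PosDef) (hRt : Rt.PosDef)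
    (M : Matrix (Fin p) (Fin p) ℝ) (hM : M = (Λ + Rt)⁻¹ * Λ)
    (δ : ℝ) (hδ1 : δ < 1)
    (lam : ℂ) (hlam : ‖lam‖ ≤ δ) :
    SchurStable ((1 : Matrix (Fin p) (Fin p) ℂ) - (1 - lam) • M.map Complex.ofReal) := by
  have hlam1 : ‖lam‖ < 1 := hlam.trans_lt hδ1
  have hc : 1 - lam ≠ 0 := sub_ne_zero.2 fun h => by simp [← h] at hlam1
  have hMreal : (Λ + Rt) * M = Λ := by
    rw [hM, mul_nonsing_inv_cancel_left _ _ ((isUnit_iff_isUnit_det _).mp (hΛ.add hRt).isUnit)]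
  have hMC : (Λ.map (algebraMap ℝ ℂ) + Rt.map (algebraMap ℝ ℂ)) * M.map (algebraMap ℝ ℂ) =
      Λ.map (algebraMap ℝ ℂ) := by
    simpa only [map_mul, map_add, RingHom.mapMatrix_apply] using congrArg (algebraMap ℝ ℂ).mapMatrix hMreal
  intro μ hμ
  obtain ⟨ν, hν, rfl⟩ := (spectrum_one_sub_smul hc _).subset hμ
  obtain ⟨t, ht, rfl⟩ :=
    hΛ.map_algebraMap.spectrum_subset_Ioo_of_add_mul_eq hRt.map_algebraMap hMC hν
  exact norm_one_sub_mul_ofReal_lt_one ht hlam1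

/-- the spectral fact underlying Lemma 1: for symmetric positive definite
`Λ, R̃` and `M = (Λ+R̃)⁻¹Λ`, every eigenvalue of `I - (1-λ)M` has modulus strictly less
than `1`, for every complex `λ` with `|λ| ≤ δ` for some `0 < δ < 1`; that is,
`I + (1-λ)𝒪` is Schur stable where `𝒪 = -(Λ+R̃)⁻¹Λ`. -/
theorem gain_iteration_schur_stable {p : ℕ}
    (Λ Rt : Matrix (Fin p) (Fin p) ℝ) (hΛ : Λ.PosDef) (hRt : Rt.PosDef)
    (M : Matrix (Fin p) (Fin p) ℝ) (hM : M = (Λ + Rt)⁻¹ * Λ)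
    (δ : ℝ) (hδ0 : 0 < δ) (hδ1 : δ < 1)
    (lam : ℂ) (hlam : ‖lam‖ ≤ δ) :
    SchurStable ((1 : Matrix (Fin p) (Fin p) ℂ) - (1 - lam) • M.map Complex.ofReal) :=
  gain_iteration_schur_stable_general Λ Rt hΛ hRt M hM δ hδ1 lam hlam
end
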